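/- arXiv:2210.02418 — 7 statements merged into one kernel-verified Lean document; each statement's English description precedes it below -/
import Mathlib

section
/- Let F : ℝ^p → ℝ be bounded below by F_lb with locally Lipschitz continuous gradient. Let x_{k+1} = x_k − M_k ∇F(x_k) with each M_k symmetric positive definite. Define χ_k(R) = 1 if ‖x_j‖ ≤ R for all j ≤ k, and 0 otherwise. Then for every R ≥ 0 there exists C_R > 0 such that for all k: [F(x_{k+1}) − F_lb] χ_{k+1}(R) ≤ [F(x_k) − F_lb − ∇F(x_k)ᵀ M_k ∇F(x_k) + C_R ‖M_k ∇F(x_k)‖²] χ_k(R). -/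
/-! On the ball of radius `R + 1`, where `∇F` is `L`-Lipschitz, the descent lemma
`F (a - d) ≤ F a - ⟪∇F a, d⟫ + L ‖d‖²` holds as long as both points stay in the ball.
If `x_{k+1}` stays in the ball of radius `R`, this is the recursion. If only `x_k` does, the
left side vanishes and the right side is nonnegative: for a short step `‖d‖ ≤ 1` the descent
lemma still applies and `F` is bounded below, while for a long step `⟪∇F x_k, d⟫ ≤ G ‖d‖ ≤ G ‖d‖²`,
where `G` bounds `‖∇F‖` on the ball of radius `R`; hence `C = L + G + 1` works. -/

open scoped Classical

/-- Indicator: `1` if all iterates up to time `k` stay in the closed ball of radius `R`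
around the origin, `0` otherwise. -/
noncomputable def chi {p : ℕ} (x : ℕ → EuclideanSpace ℝ (Fin p)) (k : ℕ) (R : ℝ) : ℝ :=
  if ∀ j ≤ k, ‖x j‖ ≤ R then 1 else 0

open Metric InnerProductSpace

section Descent

variable {E : Type*} [NormedAddCommGroup E] [InnerProductSpace ℝ E]

theorem norm_fderiv_sub_fderiv_eq_norm_gradient_sub [CompleteSpace E] (F : E → ℝ) (z w : E) :
    ‖fderiv ℝ F z - fderiv ℝ F w‖ = ‖gradient F z - gradient F w‖ := by
  rw [gradient, gradient, ← map_sub, LinearIsometryEquiv.norm_map]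

theorem Convex.le_add_inner_gradient_add_mul_norm_sq [CompleteSpace E]
    {F : E → ℝ} {s : Set E} {L : ℝ}
    (hs : Convex ℝ s) (hF : ∀ z ∈ s, DifferentiableAt ℝ F z) (hL : 0 ≤ L)
    (hlip : ∀ z ∈ s, ∀ w ∈ s, ‖gradient F z - gradient F w‖ ≤ L * ‖z - w‖)
    {a b : E} (ha : a ∈ s) (hb : b ∈ s) :
    F b ≤ F a + ⟪gradient F a, b - a⟫_ℝ + L * ‖b - a‖ ^ 2 := by
  have hseg : segment ℝ a b ⊆ s := hs.segment_subset ha hb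
  have hfderiv : ∀ z ∈ segment ℝ a b, ‖fderiv ℝ F z - fderiv ℝ F a‖ ≤ L * ‖b - a‖ := by
    intro z hz
    rw [norm_fderiv_sub_fderiv_eq_norm_gradient_sub]
    calc ‖gradient F z - gradient F a‖ ≤ L * ‖z - a‖ := hlip z (hseg hz) a ha
      _ ≤ L * ‖b - a‖ := mul_le_mul_of_nonneg_left (norm_sub_le_of_mem_segment hz) hL
  have key := (convex_segment a b).norm_image_sub_le_of_norm_fderiv_le'
    (fun z hz => hF z (hseg hz)) hfderiv (left_mem_segment ℝ a b) (right_mem_segment ℝ a b)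
  have happ : fderiv ℝ F a (b - a) = ⟪gradient F a, b - a⟫_ℝ := toDual_symm_apply.symm
  rw [happ, Real.norm_eq_abs] at key
  nlinarith [(abs_le.1 key).2]

theorem sub_inner_add_mul_norm_sq_nonneg {f : E → ℝ} {f_lb R L G C : ℝ} {a g d : E}
    (hbd : ∀ y, f_lb ≤ f y) (ha : ‖a‖ ≤ R) (hg : ‖g‖ ≤ G) (hLC : L ≤ C) (hGC : G ≤ C)
    (hdesc : ‖a - d‖ ≤ R + 1 → f (a - d) ≤ f a - ⟪g, d⟫_ℝ + L * ‖d‖ ^ 2) :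
    0 ≤ f a - f_lb - ⟪g, d⟫_ℝ + C * ‖d‖ ^ 2 := by
  rcases le_or_gt ‖d‖ 1 with hshort | hlong
  · have hstep := hdesc ((norm_sub_le a d).trans (add_le_add ha hshort))
    nlinarith [hbd (a - d), mul_le_mul_of_nonneg_right hLC (sq_nonneg ‖d‖)]
  · have hC : 0 ≤ C := (norm_nonneg g).trans (hg.trans hGC)
    have hinner : ⟪g, d⟫_ℝ ≤ C * ‖d‖ ^ 2 := calc
      ⟪g, d⟫_ℝ ≤ ‖g‖ * ‖d‖ := real_inner_le_norm g d
      _ ≤ C * ‖d‖ := mul_le_mul_of_nonneg_right (hg.trans hGC) (norm_nonneg d)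
      _ ≤ C * ‖d‖ ^ 2 := mul_le_mul_of_nonneg_left (by nlinarith) hC
    linarith [hbd a]

end Descent

section Indicator

variable {p : ℕ} {x : ℕ → EuclideanSpace ℝ (Fin p)} {k : ℕ} {R u v : ℝ}

theorem mul_chi_succ_le_mul_chi (hin : ‖x k‖ ≤ R → ‖x (k + 1)‖ ≤ R → u ≤ v)
    (hnonneg : ‖x k‖ ≤ R → 0 ≤ v) : u * chi x (k + 1) R ≤ v * chi x k R := by
  by_cases hk1 : ∀ j ≤ k + 1, ‖x j‖ ≤ R
  · have hk : ∀ j ≤ k, ‖x j‖ ≤ R := fun j hj => hk1 j (hj.trans k.le_succ)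
    rw [chi, chi, if_pos hk1, if_pos hk, mul_one, mul_one]
    exact hin (hk k le_rfl) (hk1 (k + 1) le_rfl)
  · rw [chi, if_neg hk1, mul_zero]
    by_cases hk : ∀ j ≤ k, ‖x j‖ ≤ R
    · rw [chi, if_pos hk, mul_one]
      exact hnonneg (hk k le_rfl)
    · rw [chi, if_neg hk, mul_zero]

end Indicator

theorem optimality_gap_recursion_general {p : ℕ}
    (F : EuclideanSpace ℝ (Fin p) → ℝ) (F_lb : ℝ)
    (hbd : ∀ x, F_lb ≤ F x)
    (hdiff : Differentiable ℝ F)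
    (hlip : ∀ K : Set (EuclideanSpace ℝ (Fin p)), IsCompact K →
      ∃ L : ℝ, 0 ≤ L ∧ ∀ x ∈ K, ∀ y ∈ K, ‖gradient F x - gradient F y‖ ≤ L * ‖x - y‖)
    (M : ℕ → Matrix (Fin p) (Fin p) ℝ)
    (x : ℕ → EuclideanSpace ℝ (Fin p))
    (hx : ∀ k, x (k + 1) = x k - (M k).toEuclideanLin (gradient F (x k))) :
    ∀ R : ℝ, 0 ≤ R → ∃ C : ℝ, 0 < C ∧ ∀ k : ℕ,
      (F (x (k + 1)) - F_lb) * chi x (k + 1) R ≤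
        (F (x k) - F_lb
          - inner ℝ (gradient F (x k)) ((M k).toEuclideanLin (gradient F (x k)))
          + C * ‖(M k).toEuclideanLin (gradient F (x k))‖ ^ 2) * chi x k R := by
  intro R hR
  obtain ⟨L, hL, hLip⟩ := hlip (closedBall 0 (R + 1)) (isCompact_closedBall 0 (R + 1))
  have hdesc : ∀ a d, ‖a‖ ≤ R + 1 → ‖a - d‖ ≤ R + 1 →
      F (a - d) ≤ F a - ⟪gradient F a, d⟫_ℝ + L * ‖d‖ ^ 2 := fun a d ha hb => by
    have h := (convex_closedBall 0 (R + 1)).le_add_inner_gradient_add_mul_norm_sq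
      (fun z _ => hdiff z) hL hLip (mem_closedBall_zero_iff.2 ha) (mem_closedBall_zero_iff.2 hb)
    rwa [sub_sub_cancel_left, inner_neg_right, norm_neg, ← sub_eq_add_neg] at h
  set G := L * R + ‖gradient F 0‖
  have hgrad : ∀ a, ‖a‖ ≤ R → ‖gradient F a‖ ≤ G := fun a ha => calc
    ‖gradient F a‖ ≤ ‖gradient F a - gradient F 0‖ + ‖gradient F 0‖ := norm_le_norm_sub_add _ _
    _ ≤ L * ‖a - 0‖ + ‖gradient F 0‖ := by
      gcongr
      exact hLip a (mem_closedBall_zero_iff.2 (by linarith)) 0 (mem_closedBall_self (by linarith))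
    _ ≤ G := by rw [sub_zero]; exact add_le_add_left (mul_le_mul_of_nonneg_left ha hL) _
  have hG : 0 ≤ G := by positivity
  refine ⟨L + G + 1, by positivity, fun k => ?_⟩
  set d := (M k).toEuclideanLin (gradient F (x k))
  rw [hx k]
  refine mul_chi_succ_le_mul_chi (fun hk hk1 => ?_) fun hk =>
    sub_inner_add_mul_norm_sq_nonneg hbd hk (hgrad _ hk) (by linarith) (by linarith)
      (hdesc _ _ (by linarith))
  rw [hx k] at hk1
  nlinarith [hdesc (x k) d (by linarith) (by linarith), sq_nonneg ‖d‖]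

/-- Recursion for the optimality gap: if `F` is bounded below with locally Lipschitz
gradient and `x_{k+1} = x_k − M_k ∇F(x_k)` with `M_k` symmetric positive definite, then
for every `R ≥ 0` there is `C_R > 0` with
`[F(x_{k+1}) − F_lb] χ_{k+1}(R) ≤ [F(x_k) − F_lb − ⟨∇F(x_k), M_k ∇F(x_k)⟩ + C_R ‖M_k ∇F(x_k)‖²] χ_k(R)`. -/
theorem optimality_gap_recursion {p : ℕ}
    (F : EuclideanSpace ℝ (Fin p) → ℝ) (F_lb : ℝ)
    (hbd : ∀ x, F_lb ≤ F x)
    (hdiff : Differentiable ℝ F)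
    (hlip : ∀ K : Set (EuclideanSpace ℝ (Fin p)), IsCompact K →
      ∃ L : ℝ, 0 ≤ L ∧ ∀ x ∈ K, ∀ y ∈ K, ‖gradient F x - gradient F y‖ ≤ L * ‖x - y‖)
    (M : ℕ → Matrix (Fin p) (Fin p) ℝ)
    (hM : ∀ k, (M k).PosDef)
    (x : ℕ → EuclideanSpace ℝ (Fin p))
    (hx : ∀ k, x (k + 1) = x k - (M k).toEuclideanLin (gradient F (x k))) :
    ∀ R : ℝ, 0 ≤ R → ∃ C : ℝ, 0 < C ∧ ∀ k : ℕ,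
      (F (x (k + 1)) - F_lb) * chi x (k + 1) R ≤
        (F (x k) - F_lb
          - inner ℝ (gradient F (x k)) ((M k).toEuclideanLin (gradient F (x k)))
          + C * ‖(M k).toEuclideanLin (gradient F (x k))‖ ^ 2) * chi x k R :=
  optimality_gap_recursion_general F F_lb hbd hdiff hlip M x hx
end

section
/- Under the assumptions of the recursion lemma, if additionally λ_max(M_k) → 0 as k → ∞, then there exists K ∈ ℕ such that for all k ≥ K: [F(x_{k+1}) − F_lb] χ_{k+1}(R) ≤ [F(x_k) − F_lb − (1/2) λ_min(M_k) ‖∇F(x_k)‖²] χ_k(R). -/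
open Filter
open scoped Classical

/-- Smallest eigenvalue of a Hermitian real matrix. -/
noncomputable def lamMin {p : ℕ} [NeZero p] {M : Matrix (Fin p) (Fin p) ℝ}
    (hM : M.IsHermitian) : ℝ :=
  Finset.univ.inf' Finset.univ_nonempty hM.eigenvalues

/-- Largest eigenvalue of a Hermitian real matrix. -/
noncomputable def lamMax {p : ℕ} [NeZero p] {M : Matrix (Fin p) (Fin p) ℝ}
    (hM : M.IsHermitian) : ℝ :=
  Finset.univ.sup' Finset.univ_nonempty hM.eigenvalues

/-!
For `k` large, `2 L λ_max(M_k) ≤ 1`, where `L` is a Lipschitz constant of `∇F` on the ball of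
radius `R + C` and `C` bounds `‖∇F‖` on the ball of radius `R`. Write `g = ∇F(x_k)`. The descent
lemma `F y ≤ F x + ⟪∇F x, y - x⟫ + L ‖y - x‖²` on that ball gives:
* if `x_k` and `x_{k+1}` lie in the ball of radius `R`, then, since `‖M_k g‖² ≤ λ_max ⟪g, M_k g⟫`,
  `F(x_{k+1}) ≤ F(x_k) - ½ ⟪g, M_k g⟫ ≤ F(x_k) - ½ λ_min ‖g‖²`;
* if only `x_k` does, the right-hand side is still nonnegative: the trial point
  `x_k - λ_max g` stays in the larger ball, and
  `F_lb ≤ F(x_k - λ_max g) ≤ F(x_k) - ½ λ_max ‖g‖² ≤ F(x_k) - ½ λ_min ‖g‖²`.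
-/

open Metric
open scoped RealInnerProductSpace

namespace Matrix.IsHermitian

variable {n : Type*} [Fintype n] [DecidableEq n] {M : Matrix n n ℝ} (hM : M.IsHermitian)

theorem repr_toEuclideanLin (v : EuclideanSpace ℝ n) (i : n) :
    hM.eigenvectorBasis.repr (M.toEuclideanLin v) i =
      hM.eigenvalues i * hM.eigenvectorBasis.repr v i := by
  have hsym : M.toEuclideanLin.IsSymmetric := isSymmetric_toEuclideanLin_iff.mpr hM
  have hvec : M.toEuclideanLin (hM.eigenvectorBasis i) =
      hM.eigenvalues i • hM.eigenvectorBasis i :=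
    (WithLp.ofLp_injective 2).eq_iff.mp (hM.mulVec_eigenvectorBasis i)
  rw [OrthonormalBasis.repr_apply_apply, OrthonormalBasis.repr_apply_apply, ← hsym, hvec,
    real_inner_smul_left]

theorem inner_toEuclideanLin_eq_sum (v : EuclideanSpace ℝ n) :
    ⟪v, M.toEuclideanLin v⟫ = ∑ i, hM.eigenvalues i * hM.eigenvectorBasis.repr v i ^ 2 := by
  rw [← hM.eigenvectorBasis.repr.inner_map_map, PiLp.inner_apply]
  refine Finset.sum_congr rfl fun i _ => ?_
  rw [hM.repr_toEuclideanLin, RCLike.inner_apply, conj_trivial]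
  ring

theorem norm_toEuclideanLin_sq_eq_sum (v : EuclideanSpace ℝ n) :
    ‖M.toEuclideanLin v‖ ^ 2 = ∑ i, hM.eigenvalues i ^ 2 * hM.eigenvectorBasis.repr v i ^ 2 := by
  rw [← hM.eigenvectorBasis.repr.norm_map, EuclideanSpace.real_norm_sq_eq]
  refine Finset.sum_congr rfl fun i _ => ?_
  rw [hM.repr_toEuclideanLin]
  ring

theorem mul_norm_sq_le_inner_toEuclideanLin {a : ℝ} (ha : ∀ i, a ≤ hM.eigenvalues i)
    (v : EuclideanSpace ℝ n) : a * ‖v‖ ^ 2 ≤ ⟪v, M.toEuclideanLin v⟫ := by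
  rw [hM.inner_toEuclideanLin_eq_sum, ← hM.eigenvectorBasis.repr.norm_map,
    EuclideanSpace.real_norm_sq_eq, Finset.mul_sum]
  gcongr with i
  exact ha i

theorem norm_toEuclideanLin_sq_le_mul_inner {b : ℝ} (h0 : ∀ i, 0 ≤ hM.eigenvalues i)
    (hb : ∀ i, hM.eigenvalues i ≤ b) (v : EuclideanSpace ℝ n) :
    ‖M.toEuclideanLin v‖ ^ 2 ≤ b * ⟪v, M.toEuclideanLin v⟫ := by
  rw [hM.inner_toEuclideanLin_eq_sum, hM.norm_toEuclideanLin_sq_eq_sum, Finset.mul_sum]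
  refine Finset.sum_le_sum fun i _ => ?_
  rw [← mul_assoc, sq (hM.eigenvalues i)]
  exact mul_le_mul_of_nonneg_right (mul_le_mul_of_nonneg_right (hb i) (h0 i)) (sq_nonneg _)

end Matrix.IsHermitian

section Descent

variable {E : Type*} [NormedAddCommGroup E] [InnerProductSpace ℝ E] [CompleteSpace E]
  {F : E → ℝ} {s : Set E} {L : ℝ}

theorem le_add_inner_add_mul_norm_sq_of_gradient_lipschitzOn (hs : Convex ℝ s)
    (hF : ∀ z ∈ s, DifferentiableAt ℝ F z) (hL0 : 0 ≤ L)
    (hL : ∀ u ∈ s, ∀ v ∈ s, ‖gradient F u - gradient F v‖ ≤ L * ‖u - v‖)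
    {x y : E} (hx : x ∈ s) (hy : y ∈ s) :
    F y ≤ F x + ⟪gradient F x, y - x⟫ + L * ‖y - x‖ ^ 2 := by
  have hseg : segment ℝ x y ⊆ s := hs.segment_subset hx hy
  have bound : ∀ z ∈ segment ℝ x y,
      ‖fderiv ℝ F z - InnerProductSpace.toDual ℝ E (gradient F x)‖ ≤ L * ‖y - x‖ := by
    intro z hz
    rw [← (InnerProductSpace.toDual ℝ E).apply_symm_apply (fderiv ℝ F z), ← map_sub,
      LinearIsometryEquiv.norm_map]
    calc ‖gradient F z - gradient F x‖ ≤ L * ‖z - x‖ := hL z (hseg hz) x hx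
      _ ≤ L * ‖y - x‖ := by gcongr; exact norm_sub_le_of_mem_segment hz
  have hmvt := (convex_segment x y).norm_image_sub_le_of_norm_fderiv_le'
    (fun z hz => hF z (hseg hz)) bound (left_mem_segment ℝ x y) (right_mem_segment ℝ x y)
  rw [InnerProductSpace.toDual_apply_apply, Real.norm_eq_abs] at hmvt
  linarith [le_abs_self (F y - F x - ⟪gradient F x, y - x⟫)]

theorem le_sub_half_inner_of_gradient_lipschitzOn (hs : Convex ℝ s)
    (hF : ∀ z ∈ s, DifferentiableAt ℝ F z) (hL0 : 0 ≤ L)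
    (hL : ∀ u ∈ s, ∀ v ∈ s, ‖gradient F u - gradient F v‖ ≤ L * ‖u - v‖)
    {x d : E} (hx : x ∈ s) (hxd : x - d ∈ s) (hd : L * ‖d‖ ^ 2 ≤ 1 / 2 * ⟪gradient F x, d⟫) :
    F (x - d) ≤ F x - 1 / 2 * ⟪gradient F x, d⟫ := by
  have := le_add_inner_add_mul_norm_sq_of_gradient_lipschitzOn hs hF hL0 hL hx hxd
  rw [sub_sub_cancel_left, inner_neg_right, norm_neg] at this
  linarith

theorem le_sub_half_mul_norm_sq_of_gradient_lipschitzOn (hs : Convex ℝ s)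
    (hF : ∀ z ∈ s, DifferentiableAt ℝ F z) (hL0 : 0 ≤ L)
    (hL : ∀ u ∈ s, ∀ v ∈ s, ‖gradient F u - gradient F v‖ ≤ L * ‖u - v‖)
    {x : E} {c : ℝ} (hc0 : 0 ≤ c) (hcL : 2 * L * c ≤ 1) (hx : x ∈ s)
    (hxc : x - c • gradient F x ∈ s) :
    F (x - c • gradient F x) ≤ F x - c / 2 * ‖gradient F x‖ ^ 2 := by
  have hd : L * ‖c • gradient F x‖ ^ 2 ≤ 1 / 2 * ⟪gradient F x, c • gradient F x⟫ := by
    rw [norm_smul, real_inner_smul_right, real_inner_self_eq_norm_sq, Real.norm_of_nonneg hc0]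
    nlinarith [mul_nonneg (mul_nonneg hc0 (sq_nonneg ‖gradient F x‖)) (sub_nonneg.2 hcL)]
  have := le_sub_half_inner_of_gradient_lipschitzOn hs hF hL0 hL hx hxc hd
  rw [real_inner_smul_right, real_inner_self_eq_norm_sq] at this
  linarith

end Descent

section ExtremeEigenvalues

variable {p : ℕ} [NeZero p] {M : Matrix (Fin p) (Fin p) ℝ}

theorem lamMin_le_eigenvalues (hM : M.IsHermitian) (i : Fin p) : lamMin hM ≤ hM.eigenvalues i :=
  Finset.inf'_le _ (Finset.mem_univ i)

theorem eigenvalues_le_lamMax (hM : M.IsHermitian) (i : Fin p) : hM.eigenvalues i ≤ lamMax hM :=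
  Finset.le_sup' _ (Finset.mem_univ i)

theorem lamMin_le_lamMax (hM : M.IsHermitian) : lamMin hM ≤ lamMax hM :=
  (lamMin_le_eigenvalues hM 0).trans (eigenvalues_le_lamMax hM 0)

theorem le_sub_half_lamMin_mul_norm_sq_of_gradient_lipschitzOn
    {F : EuclideanSpace ℝ (Fin p) → ℝ} {s : Set (EuclideanSpace ℝ (Fin p))} {L : ℝ}
    (hs : Convex ℝ s) (hF : ∀ z ∈ s, DifferentiableAt ℝ F z) (hL0 : 0 ≤ L)
    (hL : ∀ u ∈ s, ∀ v ∈ s, ‖gradient F u - gradient F v‖ ≤ L * ‖u - v‖)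
    (hM : M.PosSemidef) (hLM : 2 * L * lamMax hM.1 ≤ 1) {x : EuclideanSpace ℝ (Fin p)}
    (hx : x ∈ s) (hxM : x - M.toEuclideanLin (gradient F x) ∈ s) :
    F (x - M.toEuclideanLin (gradient F x)) ≤
      F x - 1 / 2 * lamMin hM.1 * ‖gradient F x‖ ^ 2 := by
  set g := gradient F x
  have hinner_nonneg := hM.1.mul_norm_sq_le_inner_toEuclideanLin hM.eigenvalues_nonneg g
  have hinner_ge := hM.1.mul_norm_sq_le_inner_toEuclideanLin (lamMin_le_eigenvalues hM.1) g
  have hnorm_le := hM.1.norm_toEuclideanLin_sq_le_mul_inner hM.eigenvalues_nonneg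
    (eigenvalues_le_lamMax hM.1) g
  have hd : L * ‖M.toEuclideanLin g‖ ^ 2 ≤ 1 / 2 * ⟪g, M.toEuclideanLin g⟫ := by
    nlinarith [mul_le_mul_of_nonneg_left hnorm_le hL0]
  linarith [le_sub_half_inner_of_gradient_lipschitzOn hs hF hL0 hL hx hxM hd]

theorem lamMax_nonneg (hM : M.PosSemidef) : 0 ≤ lamMax hM.1 :=
  (hM.eigenvalues_nonneg 0).trans (eigenvalues_le_lamMax hM.1 0)

theorem le_sub_half_lamMin_mul_norm_sq_of_forall_le
    {F : EuclideanSpace ℝ (Fin p) → ℝ} {s : Set (EuclideanSpace ℝ (Fin p))} {L F_lb : ℝ}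
    (hbd : ∀ y, F_lb ≤ F y) (hs : Convex ℝ s) (hF : ∀ z ∈ s, DifferentiableAt ℝ F z)
    (hL0 : 0 ≤ L) (hL : ∀ u ∈ s, ∀ v ∈ s, ‖gradient F u - gradient F v‖ ≤ L * ‖u - v‖)
    (hM : M.PosSemidef) (hLM : 2 * L * lamMax hM.1 ≤ 1) {x : EuclideanSpace ℝ (Fin p)}
    (hx : x ∈ s) (hxM : x - lamMax hM.1 • gradient F x ∈ s) :
    F_lb ≤ F x - 1 / 2 * lamMin hM.1 * ‖gradient F x‖ ^ 2 := by
  linarith [hbd (x - lamMax hM.1 • gradient F x),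
    le_sub_half_mul_norm_sq_of_gradient_lipschitzOn hs hF hL0 hL (lamMax_nonneg hM) hLM hx hxM,
    mul_le_mul_of_nonneg_right (lamMin_le_lamMax hM.1) (sq_nonneg ‖gradient F x‖)]

end ExtremeEigenvalues

theorem mul_chi_succ_le_mul_chi_s5 {p : ℕ} {x : ℕ → EuclideanSpace ℝ (Fin p)} {k : ℕ} {R a b : ℝ}
    (hab : (∀ j ≤ k + 1, ‖x j‖ ≤ R) → a ≤ b) (hb : (∀ j ≤ k, ‖x j‖ ≤ R) → 0 ≤ b) :
    a * chi x (k + 1) R ≤ b * chi x k R := by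
  unfold chi
  split_ifs with h₁ h₀ h₀
  · simpa using hab h₁
  · exact absurd (fun j hj => h₁ j (hj.trans k.le_succ)) h₀
  · simpa using hb h₀
  · simp

theorem optimalityGap_mul_chi_succ_le {p : ℕ} [NeZero p] {F : EuclideanSpace ℝ (Fin p) → ℝ}
    {F_lb L R C : ℝ} {M : Matrix (Fin p) (Fin p) ℝ} {x : ℕ → EuclideanSpace ℝ (Fin p)} {k : ℕ}
    (hbd : ∀ y, F_lb ≤ F y) (hF : Differentiable ℝ F) (hL1 : 1 ≤ L)
    (hL : ∀ u ∈ closedBall 0 (R + C), ∀ v ∈ closedBall 0 (R + C),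
      ‖gradient F u - gradient F v‖ ≤ L * ‖u - v‖)
    (hC : ∀ z ∈ closedBall 0 R, ‖gradient F z‖ ≤ C)
    (hM : M.PosSemidef) (hLM : 2 * L * lamMax hM.1 ≤ 1)
    (hstep : x (k + 1) = x k - M.toEuclideanLin (gradient F (x k))) :
    (F (x (k + 1)) - F_lb) * chi x (k + 1) R ≤
      (F (x k) - F_lb - 1 / 2 * lamMin hM.1 * ‖gradient F (x k)‖ ^ 2) * chi x k R := by
  have hF' : ∀ z ∈ closedBall 0 (R + C), DifferentiableAt ℝ F z := fun z _ => hF z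
  refine mul_chi_succ_le_mul_chi_s5 (fun hin => ?_) (fun hin => ?_)
  all_goals
    have hxk : ‖x k‖ ≤ R := hin k (by omega)
    have hgC : ‖gradient F (x k)‖ ≤ C := hC _ (mem_closedBall_zero_iff.mpr hxk)
    have hxs : x k ∈ closedBall 0 (R + C) :=
      mem_closedBall_zero_iff.mpr (by linarith [norm_nonneg (gradient F (x k))])
  · have hxs' : x (k + 1) ∈ closedBall 0 (R + C) := mem_closedBall_zero_iff.mpr
      (by linarith [hin (k + 1) le_rfl, norm_nonneg (gradient F (x k))])
    rw [hstep] at hxs' ⊢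
    linarith [le_sub_half_lamMin_mul_norm_sq_of_gradient_lipschitzOn (convex_closedBall _ _)
      hF' (by positivity) hL hM hLM hxs hxs']
  · have hc0 := lamMax_nonneg hM
    have hc1 : lamMax hM.1 ≤ 1 := by nlinarith
    have hxs' : x k - lamMax hM.1 • gradient F (x k) ∈ closedBall 0 (R + C) := by
      refine mem_closedBall_zero_iff.mpr ((norm_sub_le _ _).trans ?_)
      rw [norm_smul, Real.norm_of_nonneg hc0]
      nlinarith [norm_nonneg (gradient F (x k))]
    linarith [le_sub_half_lamMin_mul_norm_sq_of_forall_le hbd (convex_closedBall _ _)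
      hF' (by positivity) hL hM hLM hxs hxs']

theorem optimality_gap_recursion_simplified_general {p : ℕ} [NeZero p]
    (F : EuclideanSpace ℝ (Fin p) → ℝ) (F_lb : ℝ)
    (hbd : ∀ x, F_lb ≤ F x)
    (hdiff : Differentiable ℝ F)
    (hlip : ∀ K : Set (EuclideanSpace ℝ (Fin p)), IsCompact K →
      ∃ L : ℝ, 0 ≤ L ∧ ∀ x ∈ K, ∀ y ∈ K, ‖gradient F x - gradient F y‖ ≤ L * ‖x - y‖)
    (M : ℕ → Matrix (Fin p) (Fin p) ℝ)
    (hM : ∀ k, (M k).PosDef)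
    (hmax0 : Tendsto (fun k => lamMax (hM k).1) atTop (nhds 0))
    (x : ℕ → EuclideanSpace ℝ (Fin p))
    (hx : ∀ k, x (k + 1) = x k - (M k).toEuclideanLin (gradient F (x k)))
    (R : ℝ) :
    ∃ K : ℕ, ∀ k : ℕ, K ≤ k →
      (F (x (k + 1)) - F_lb) * chi x (k + 1) R ≤
        (F (x k) - F_lb - (1 / 2) * lamMin (hM k).1 * ‖gradient F (x k)‖ ^ 2)
          * chi x k R := by
  obtain ⟨C, hC⟩ : ∃ C, ∀ z ∈ closedBall 0 R, ‖gradient F z‖ ≤ C := by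
    obtain ⟨L, -, hL⟩ := hlip _ (isCompact_closedBall 0 R)
    exact (isCompact_closedBall 0 R).exists_bound_of_continuousOn
      (LipschitzOnWith.of_dist_le' (by simpa only [dist_eq_norm] using hL)).continuousOn
  obtain ⟨L₀, -, hL₀⟩ := hlip (closedBall 0 (R + C)) (isCompact_closedBall _ _)
  set L := max L₀ 1
  have hL : ∀ u ∈ closedBall 0 (R + C), ∀ v ∈ closedBall 0 (R + C),
      ‖gradient F u - gradient F v‖ ≤ L * ‖u - v‖ :=
    fun u hu v hv => (hL₀ u hu v hv).trans (by gcongr; exact le_max_left _ _)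
  obtain ⟨K, hK⟩ := eventually_atTop.mp
    ((hmax0.const_mul (2 * L)).eventually (ge_mem_nhds (show 2 * L * (0 : ℝ) < 1 by simp)))
  exact ⟨K, fun k hk => optimalityGap_mul_chi_succ_le hbd hdiff (le_max_right _ _) hL hC
    (hM k).posSemidef (hK k hk) (hx k)⟩

/-- Simplified recursion for the optimality gap: under the assumptions of the recursion
lemma, if additionally `λ_max(M_k) → 0`, then there is `K` such that for all `k ≥ K`:
`[F(x_{k+1}) − F_lb] χ_{k+1}(R) ≤ [F(x_k) − F_lb − (1/2) λ_min(M_k) ‖∇F(x_k)‖²] χ_k(R)`. -/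
theorem optimality_gap_recursion_simplified {p : ℕ} [NeZero p]
    (F : EuclideanSpace ℝ (Fin p) → ℝ) (F_lb : ℝ)
    (hbd : ∀ x, F_lb ≤ F x)
    (hdiff : Differentiable ℝ F)
    (hlip : ∀ K : Set (EuclideanSpace ℝ (Fin p)), IsCompact K →
      ∃ L : ℝ, 0 ≤ L ∧ ∀ x ∈ K, ∀ y ∈ K, ‖gradient F x - gradient F y‖ ≤ L * ‖x - y‖)
    (M : ℕ → Matrix (Fin p) (Fin p) ℝ)
    (hM : ∀ k, (M k).PosDef)
    (hmax0 : Tendsto (fun k => lamMax (hM k).1) atTop (nhds 0))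
    (x : ℕ → EuclideanSpace ℝ (Fin p))
    (hx : ∀ k, x (k + 1) = x k - (M k).toEuclideanLin (gradient F (x k)))
    (R : ℝ) (hR : 0 ≤ R) :
    ∃ K : ℕ, ∀ k : ℕ, K ≤ k →
      (F (x (k + 1)) - F_lb) * chi x (k + 1) R ≤
        (F (x k) - F_lb - (1 / 2) * lamMin (hM k).1 * ‖gradient F (x k)‖ ^ 2)
          * chi x k R :=
  optimality_gap_recursion_simplified_general F F_lb hbd hdiff hlip M hM hmax0 x hx R
end

section
/- Let F : ℝ^p → ℝ be bounded below with locally Lipschitz gradient, and let x_{k+1} = x_k − M_k ∇F(x_k) where M_k are symmetric positive definite, ∑_k λ_min(M_k) = ∞, and λ_max(M_k) → 0. If sup_k ‖x_k‖ < ∞, then lim_{k→∞} F(x_k) exists and is finite, and liminf_{k→∞} ‖∇F(x_k)‖ = 0. -/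
/-!
On the ball `‖x‖ ≤ B` containing the iterates, `∇F` is `L`-Lipschitz and the ball is convex, so the
descent lemma applies to every step: with `g = ∇F(x_k)` and `d = M_k g`,
`F(x_{k+1}) ≤ F(x_k) - ⟪g, d⟫ + L/2 ‖d‖² ≤ F(x_k) - (1 - L λ_max(M_k)/2) ⟪g, d⟫`.
Once `L λ_max(M_k) ≤ 1` this gives `F(x_{k+1}) + λ_min(M_k)/2 ‖g‖² ≤ F(x_k)`. Hence `F(x_k)` is
eventually nonincreasing and bounded below, so it converges; and if `‖∇F(x_k)‖ ≥ ε` eventually,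
telescoping bounds `ε² ∑ λ_min(M_k) / 2` by `F(x_N) - F_lb`, contradicting divergence of the sum.
-/

open Filter

open Set RealInnerProductSpace
open scoped NNReal

namespace Matrix.IsHermitian

variable {n : Type*} [Fintype n] [DecidableEq n] {A : Matrix n n ℝ} (hA : A.IsHermitian)
  (v : EuclideanSpace ℝ n)

lemma eigenvectorBasis_repr_toEuclideanLin (i : n) :
    hA.eigenvectorBasis.repr (A.toEuclideanLin v) i
      = hA.eigenvalues i * hA.eigenvectorBasis.repr v i := by
  have hsymm : A.toEuclideanLin.IsSymmetric := isSymmetric_toEuclideanLin_iff.2 hA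
  have heig : A.toEuclideanLin (hA.eigenvectorBasis i)
      = hA.eigenvalues i • hA.eigenvectorBasis i := by
    apply (WithLp.equiv 2 (n → ℝ)).injective
    simpa using hA.mulVec_eigenvectorBasis i
  simp only [OrthonormalBasis.repr_apply_apply]
  rw [← hsymm, heig, real_inner_smul_left]

lemma inner_toEuclideanLin_eq_sum_s6 :
    ⟪v, A.toEuclideanLin v⟫ = ∑ i, hA.eigenvalues i * hA.eigenvectorBasis.repr v i ^ 2 := by
  rw [← hA.eigenvectorBasis.repr.inner_map_map, PiLp.inner_apply]
  refine Finset.sum_congr rfl fun i _ => ?_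
  rw [eigenvectorBasis_repr_toEuclideanLin, real_inner_eq_re_inner, RCLike.inner_apply]
  simp only [conj_trivial, RCLike.re_to_real]
  ring

lemma norm_sq_eq_sum :
    ‖v‖ ^ 2 = ∑ i, hA.eigenvectorBasis.repr v i ^ 2 := by
  rw [← hA.eigenvectorBasis.repr.norm_map, EuclideanSpace.norm_sq_eq]
  simp only [Real.norm_eq_abs, sq_abs]

lemma norm_toEuclideanLin_sq_eq_sum_s6 :
    ‖A.toEuclideanLin v‖ ^ 2 = ∑ i, hA.eigenvalues i ^ 2 * hA.eigenvectorBasis.repr v i ^ 2 := by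
  simp only [norm_sq_eq_sum hA, eigenvectorBasis_repr_toEuclideanLin, mul_pow]

lemma mul_norm_sq_le_inner_toEuclideanLin_s6 {c : ℝ} (hc : ∀ i, c ≤ hA.eigenvalues i) :
    c * ‖v‖ ^ 2 ≤ ⟪v, A.toEuclideanLin v⟫ := by
  rw [inner_toEuclideanLin_eq_sum_s6, norm_sq_eq_sum hA, Finset.mul_sum]
  gcongr with i
  exact hc i

end Matrix.IsHermitian

lemma Matrix.PosSemidef.norm_toEuclideanLin_sq_le_mul_inner {n : Type*} [Fintype n]
    [DecidableEq n] {A : Matrix n n ℝ} (hA : A.PosSemidef) {c : ℝ}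
    (hc : ∀ i, hA.1.eigenvalues i ≤ c) (v : EuclideanSpace ℝ n) :
    ‖A.toEuclideanLin v‖ ^ 2 ≤ c * ⟪v, A.toEuclideanLin v⟫ := by
  rw [hA.1.inner_toEuclideanLin_eq_sum_s6, hA.1.norm_toEuclideanLin_sq_eq_sum_s6, Finset.mul_sum]
  refine Finset.sum_le_sum fun i _ => ?_
  rw [← mul_assoc, sq (hA.1.eigenvalues i)]
  gcongr
  exacts [hA.eigenvalues_nonneg i, hc i]

section lamMinMax

variable {p : ℕ} [NeZero p] {A : Matrix (Fin p) (Fin p) ℝ}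

lemma lamMin_le_eigenvalues_s6 (hA : A.IsHermitian) (i : Fin p) : lamMin hA ≤ hA.eigenvalues i :=
  Finset.inf'_le _ (Finset.mem_univ i)

lemma eigenvalues_le_lamMax_s6 (hA : A.IsHermitian) (i : Fin p) : hA.eigenvalues i ≤ lamMax hA :=
  Finset.le_sup' _ (Finset.mem_univ i)

lemma lamMin_pos (hA : A.PosDef) : 0 < lamMin hA.1 :=
  (Finset.lt_inf'_iff _).2 fun i _ => hA.eigenvalues_pos i

end lamMinMax

theorem LipschitzOnWith.le_add_inner_gradient_add {E : Type*} [NormedAddCommGroup E]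
    [InnerProductSpace ℝ E] [CompleteSpace E] {F : E → ℝ} {K : Set E} {L : ℝ≥0}
    (hF : Differentiable ℝ F) (hK : Convex ℝ K) (hlip : LipschitzOnWith L (gradient F) K)
    {a d : E} (ha : a ∈ K) (had : a + d ∈ K) :
    F (a + d) ≤ F a + ⟪gradient F a, d⟫ + L / 2 * ‖d‖ ^ 2 := by
  -- `F` along the segment minus its quadratic upper model; the Lipschitz bound makes `φ' ≤ 0`.
  set φ : ℝ → ℝ := fun t => F (a + t • d) - t * ⟪gradient F a, d⟫ - L / 2 * ‖d‖ ^ 2 * t ^ 2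
  have hφ : ∀ t, HasDerivAt φ
      (⟪gradient F (a + t • d), d⟫ - ⟪gradient F a, d⟫ - L / 2 * ‖d‖ ^ 2 * (2 * t)) t := by
    intro t
    have hline : HasDerivAt (fun t : ℝ => a + t • d) d t := by
      simpa using ((hasDerivAt_id t).smul_const d).const_add a
    have hFt := (hF (a + t • d)).hasGradientAt.hasFDerivAt.comp_hasDerivAt t hline
    refine ((hFt.sub (hasDerivAt_mul_const ⟪gradient F a, d⟫)).sub
      ((hasDerivAt_pow 2 t).const_mul (L / 2 * ‖d‖ ^ 2))).congr_deriv ?_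
    rw [InnerProductSpace.toDual_apply_apply]
    norm_num
  have hanti : AntitoneOn φ (Icc 0 1) := by
    refine antitoneOn_of_hasDerivWithinAt_nonpos (convex_Icc 0 1)
      (fun t _ => (hφ t).continuousAt.continuousWithinAt) (fun t _ => (hφ t).hasDerivWithinAt)
      fun t ht => ?_
    rw [interior_Icc] at ht
    have hlipt : ‖gradient F (a + t • d) - gradient F a‖ ≤ L * (t * ‖d‖) := by
      have := hlip.dist_le_mul _ (hK.add_smul_mem ha had (Ioo_subset_Icc_self ht)) _ ha
      rwa [dist_eq_norm, dist_eq_norm, add_sub_cancel_left, norm_smul, Real.norm_of_nonneg ht.1.le]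
        at this
    have hgap := calc ⟪gradient F (a + t • d), d⟫ - ⟪gradient F a, d⟫
        _ = ⟪gradient F (a + t • d) - gradient F a, d⟫ := (inner_sub_left _ _ _).symm
        _ ≤ ‖gradient F (a + t • d) - gradient F a‖ * ‖d‖ := real_inner_le_norm _ _
        _ ≤ L * (t * ‖d‖) * ‖d‖ := by gcongr
    linarith
  have h01 := hanti (left_mem_Icc.2 zero_le_one) (right_mem_Icc.2 zero_le_one) zero_le_one
  simp only [φ, zero_smul, one_smul, add_zero, zero_mul, one_mul, sub_zero, one_pow, mul_one,
    ne_eq, OfNat.ofNat_ne_zero, not_false_eq_true, zero_pow, mul_zero] at h01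
  linarith

lemma frequently_lt_of_add_mul_le {f s a : ℕ → ℝ} {lb ε : ℝ} (hf : ∀ k, lb ≤ f k)
    (hs : ∀ k, 0 ≤ s k) (hdiv : Tendsto (fun n => ∑ k ∈ Finset.range n, s k) atTop atTop)
    (hdesc : ∀ᶠ k in atTop, f (k + 1) + s k * a k ≤ f k) (hε : 0 < ε) :
    ∃ᶠ k in atTop, a k < ε := by
  by_contra h
  rw [not_frequently] at h
  obtain ⟨N, hN⟩ := eventually_atTop.1 (hdesc.and h)
  set S : ℕ → ℝ := fun n => ∑ k ∈ Finset.range n, s k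
  have hmono : ∀ m, N ≤ m → f m + ε * S m ≤ f N + ε * S N := by
    intro m hm
    induction m, hm using Nat.le_induction with
    | base => rfl
    | succ m hm ih =>
      have hεa : ε * s m ≤ s m * a m := by
        rw [mul_comm]; exact mul_le_mul_of_nonneg_left (not_lt.1 (hN m hm).2) (hs m)
      simp only [S, Finset.sum_range_succ]
      linarith [(hN m hm).1]
  obtain ⟨m, hm, hmN⟩ :=
    ((hdiv.eventually_gt_atTop ((f N + ε * S N - lb) / ε)).and (eventually_ge_atTop N)).exists
  rw [div_lt_iff₀ hε] at hm
  linarith [hmono m hmN, hf m]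

lemma liminf_eq_zero_of_forall_frequently_lt {α : Type*} {l : Filter α} {u : α → ℝ}
    (hu : ∀ x, 0 ≤ u x) (h : ∀ ε > 0, ∃ᶠ x in l, u x < ε) : liminf u l = 0 := by
  refine le_antisymm (le_of_forall_gt_imp_ge_of_dense fun ε hε => ?_) ?_
  · exact liminf_le_of_frequently_le ((h ε hε).mono fun _ => le_of_lt) (isBoundedUnder_of ⟨0, hu⟩)
  · -- no boundedness of `u` is needed: in `ℝ` the `sSup` of an unbounded set is `0`
    exact Real.sSup_nonneg' ⟨0, Eventually.of_forall hu, le_rfl⟩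

lemma exists_tendsto_of_eventually_le_of_forall_le {f : ℕ → ℝ} {lb : ℝ} (hf : ∀ k, lb ≤ f k)
    (hdesc : ∀ᶠ k in atTop, f (k + 1) ≤ f k) : ∃ l, Tendsto f atTop (nhds l) := by
  obtain ⟨N, hN⟩ := eventually_atTop.1 hdesc
  have hanti : Antitone fun n => f (n + N) :=
    antitone_nat_of_succ_le fun n => by simpa [Nat.add_right_comm] using hN (n + N) (by omega)
  exact ⟨_, (tendsto_add_atTop_iff_nat N).1
    (tendsto_atTop_ciInf hanti ⟨lb, forall_mem_range.2 fun n => hf _⟩)⟩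
lemma add_half_lamMin_mul_sq_le_of_gradient_step {p : ℕ} [NeZero p]
    {F : EuclideanSpace ℝ (Fin p) → ℝ} {K : Set (EuclideanSpace ℝ (Fin p))} {L : ℝ≥0}
    (hF : Differentiable ℝ F) (hK : Convex ℝ K) (hlip : LipschitzOnWith L (gradient F) K)
    {A : Matrix (Fin p) (Fin p) ℝ} (hA : A.PosDef) (hAL : L * lamMax hA.1 ≤ 1)
    {x : EuclideanSpace ℝ (Fin p)} (hx : x ∈ K) (hx' : x - A.toEuclideanLin (gradient F x) ∈ K) :
    F (x - A.toEuclideanLin (gradient F x)) + lamMin hA.1 / 2 * ‖gradient F x‖ ^ 2 ≤ F x := by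
  set g := gradient F x
  set d := A.toEuclideanLin g
  have hdesc := hlip.le_add_inner_gradient_add hF hK hx (d := -d) (by rwa [← sub_eq_add_neg])
  rw [← sub_eq_add_neg, inner_neg_right, norm_neg] at hdesc
  have hmin : lamMin hA.1 * ‖g‖ ^ 2 ≤ ⟪g, d⟫ :=
    hA.1.mul_norm_sq_le_inner_toEuclideanLin_s6 g (lamMin_le_eigenvalues_s6 hA.1)
  have hmax : ‖d‖ ^ 2 ≤ lamMax hA.1 * ⟪g, d⟫ :=
    hA.posSemidef.norm_toEuclideanLin_sq_le_mul_inner (eigenvalues_le_lamMax_s6 hA.1) g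
  have hinner : 0 ≤ ⟪g, d⟫ := (mul_nonneg (lamMin_pos hA).le (sq_nonneg _)).trans hmin
  calc F (x - d) + lamMin hA.1 / 2 * ‖g‖ ^ 2
      _ ≤ F x - ⟪g, d⟫ + L / 2 * ‖d‖ ^ 2 + ⟪g, d⟫ / 2 := by linarith
      _ ≤ F x - ⟪g, d⟫ + L / 2 * (lamMax hA.1 * ⟪g, d⟫) + ⟪g, d⟫ / 2 := by gcongr
      _ ≤ F x := by nlinarith [mul_le_mul_of_nonneg_right hAL hinner]

/-- Global convergence without summability: if `F` is bounded below with locally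
Lipschitz gradient, the step sizes are symmetric positive definite with
`∑ λ_min(M_k) = ∞` and `λ_max(M_k) → 0`, and the iterates remain bounded, then
`F(x_k)` converges to a finite limit and `liminf ‖∇F(x_k)‖ = 0`. -/
theorem zoutendijk_without_summability {p : ℕ} [NeZero p]
    (F : EuclideanSpace ℝ (Fin p) → ℝ) (F_lb : ℝ)
    (hbd : ∀ x, F_lb ≤ F x)
    (hdiff : Differentiable ℝ F)
    (hlip : ∀ K : Set (EuclideanSpace ℝ (Fin p)), IsCompact K →
      ∃ L : ℝ, 0 ≤ L ∧ ∀ x ∈ K, ∀ y ∈ K, ‖gradient F x - gradient F y‖ ≤ L * ‖x - y‖)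
    (M : ℕ → Matrix (Fin p) (Fin p) ℝ)
    (hM : ∀ k, (M k).PosDef)
    (hdiv : Tendsto (fun n => ∑ k ∈ Finset.range n, lamMin (hM k).1) atTop atTop)
    (hmax0 : Tendsto (fun k => lamMax (hM k).1) atTop (nhds 0))
    (x : ℕ → EuclideanSpace ℝ (Fin p))
    (hx : ∀ k, x (k + 1) = x k - (M k).toEuclideanLin (gradient F (x k)))
    (hbound : ∃ B : ℝ, ∀ k, ‖x k‖ ≤ B) :
    (∃ l : ℝ, Tendsto (fun k => F (x k)) atTop (nhds l)) ∧
      Filter.liminf (fun k => ‖gradient F (x k)‖) atTop = 0 := by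
  obtain ⟨B, hB⟩ := hbound
  obtain ⟨L, hL0, hL⟩ := hlip _ (isCompact_closedBall (0 : EuclideanSpace ℝ (Fin p)) B)
  have hlipB : LipschitzOnWith L.toNNReal (gradient F) (Metric.closedBall 0 B) :=
    LipschitzOnWith.of_dist_le_mul fun y hy z hz => by
      simpa [dist_eq_norm, Real.coe_toNNReal _ hL0] using hL y hy z hz
  have hxB : ∀ k, x k ∈ Metric.closedBall 0 B := fun k => mem_closedBall_zero_iff.2 (hB k)
  have hsmall : ∀ᶠ k in atTop, L * lamMax (hM k).1 ≤ 1 :=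
    (hmax0.const_mul L).eventually_le_const (by simp)
  have hstep : ∀ᶠ k in atTop,
      F (x (k + 1)) + lamMin (hM k).1 / 2 * ‖gradient F (x k)‖ ^ 2 ≤ F (x k) :=
    hsmall.mono fun k hk => by
      rw [hx k]
      exact add_half_lamMin_mul_sq_le_of_gradient_step hdiff (convex_closedBall 0 B) hlipB (hM k)
        (by rwa [Real.coe_toNNReal _ hL0]) (hxB k) (hx k ▸ hxB (k + 1))
  have hweight : ∀ k, 0 ≤ lamMin (hM k).1 / 2 := fun k => (half_pos (lamMin_pos (hM k))).le
  refine ⟨exists_tendsto_of_eventually_le_of_forall_le (fun k => hbd _) (hstep.mono fun k hk => ?_),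
    liminf_eq_zero_of_forall_frequently_lt (fun k => norm_nonneg _) fun ε hε => ?_⟩
  · nlinarith [mul_nonneg (hweight k) (sq_nonneg ‖gradient F (x k)‖)]
  · have hdiv' : Tendsto (fun n => ∑ k ∈ Finset.range n, lamMin (hM k).1 / 2) atTop atTop := by
      simpa only [Finset.sum_div] using hdiv.atTop_div_const two_pos
    exact (frequently_lt_of_add_mul_le (fun k => hbd _) hweight hdiv' hstep (pow_pos hε 2)).mono
      fun k hk => lt_of_pow_lt_pow_left₀ 2 hε.le hk
end

section
/- Let (x_k) ⊂ ℝ^p be a sequence such that for some fixed z₁, …, z_{p+1} ∈ ℝ^p whose affine hull is ℝ^p, the limits lim_k ‖x_k − z_j‖ exist and are finite for all j = 1, …, p+1. Then (x_k) converges to a point in ℝ^p. -/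
open Filter

/-- Triangulation: if `z₁, …, z_{p+1}` are points of `ℝ^p` whose affine hull is all of
`ℝ^p` and, for each `j`, the distances `‖x_k − z_j‖` converge to a finite limit, then
the sequence `(x_k)` converges to a point of `ℝ^p`. -/
theorem converges_of_distances_converge {p : ℕ}
    (x : ℕ → EuclideanSpace ℝ (Fin p))
    (z : Fin (p + 1) → EuclideanSpace ℝ (Fin p))
    (hz : affineSpan ℝ (Set.range z) = ⊤)
    (hlim : ∀ j : Fin (p + 1), ∃ d : ℝ,
      Tendsto (fun k => ‖x k - z j‖) atTop (nhds d)) :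
    ∃ xstar : EuclideanSpace ℝ (Fin p), Tendsto x atTop (nhds xstar) := by
  classical
  -- The differences z j - z 0 span the whole space
  have hvspan : Submodule.span ℝ (Set.range fun j => z j - z 0) = ⊤ := by
    have h1 : vectorSpan ℝ (Set.range z) = ⊤ :=
      AffineSubspace.vectorSpan_eq_top_of_affineSpan_eq_top ℝ _ _ hz
    rw [← h1, vectorSpan_range_eq_span_range_vsub_right ℝ z 0]
    rfl
  -- the linear map x ↦ (⟪z j - z 0, x⟫)_j
  let f : EuclideanSpace ℝ (Fin p) →ₗ[ℝ] (Fin (p + 1) → ℝ) :=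
    LinearMap.pi fun j => (innerSL ℝ (z j - z 0)).toLinearMap
  have hinj : Function.Injective f := by
    rw [← LinearMap.ker_eq_bot, Submodule.eq_bot_iff]
    intro v hv
    have hv' : ∀ j, (inner ℝ (z j - z 0) v : ℝ) = 0 := fun j => congrFun hv j
    have hmem : v ∈ (Submodule.span ℝ (Set.range fun j => z j - z 0))ᗮ := by
      rw [Submodule.mem_orthogonal]
      intro u hu
      induction hu using Submodule.span_induction with
      | mem u hu => obtain ⟨j, rfl⟩ := hu; exact hv' j
      | zero => simp
      | add u w _ _ hu hw => rw [inner_add_left, hu, hw, add_zero]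
      | smul c u _ hu => rw [inner_smul_left, hu, mul_zero]
    rw [hvspan, Submodule.top_orthogonal_eq_bot, Submodule.mem_bot] at hmem
    exact hmem
  have hce := f.isClosedEmbedding_of_injective (LinearMap.ker_eq_bot.mpr hinj)
  -- key algebraic identity
  have key : ∀ (w : EuclideanSpace ℝ (Fin p)) (j : Fin (p + 1)),
      (inner ℝ (z j - z 0) w : ℝ)
        = (‖w - z 0‖ ^ 2 - ‖w - z j‖ ^ 2 - ‖z 0‖ ^ 2 + ‖z j‖ ^ 2) / 2 := by
    intro w j
    rw [inner_sub_left, real_inner_comm w (z j), real_inner_comm w (z 0),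
      norm_sub_sq_real w (z 0), norm_sub_sq_real w (z j)]
    ring
  -- the limits
  choose d hd using hlim
  set y : Fin (p + 1) → ℝ :=
    fun j => ((d 0) ^ 2 - (d j) ^ 2 - ‖z 0‖ ^ 2 + ‖z j‖ ^ 2) / 2 with hy
  have hfx : Tendsto (fun k => f (x k)) atTop (nhds y) := by
    rw [tendsto_pi_nhds]
    intro j
    have : Tendsto (fun k => (‖x k - z 0‖ ^ 2 - ‖x k - z j‖ ^ 2
        - ‖z 0‖ ^ 2 + ‖z j‖ ^ 2) / 2) atTop (nhds (y j)) :=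
      (((((hd 0).pow 2).sub ((hd j).pow 2)).sub tendsto_const_nhds).add
        tendsto_const_nhds).div_const 2
    refine this.congr fun k => ?_
    simp only [f, LinearMap.pi_apply, ContinuousLinearMap.coe_coe, innerSL_apply_apply,
      key (x k) j]
  have hmem : y ∈ Set.range f :=
    hce.isClosed_range.mem_of_tendsto hfx
      (Eventually.of_forall fun k => ⟨x k, rfl⟩)
  obtain ⟨xstar, hxstar⟩ := hmem
  refine ⟨xstar, hce.toIsEmbedding.tendsto_nhds_iff.mpr ?_⟩
  rw [Function.comp_def, hxstar]
  exact hfx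
end

section
/- Define f₀ : [0, m] → ℝ piecewise by: f₀(x) = −x on [0, m/16); f₀(x) = (8/m)(x − m/8)² − 3m/32 on [m/16, 3m/16); f₀(x) = −(5m/16)·exp((5m/16)/(x − m/2) + 1) + m/4 on [3m/16, m/2); f₀(m/2) = m/4; f₀(x) = (5m/16)·exp(−(5m/16)/(x − m/2) + 1) + m/4 on (m/2, 13m/16); f₀(x) = −(8/m)(x − 7m/8)² + 19m/32 on [13m/16, 15m/16); f₀(x) = −x + 3m/2 on [15m/16, m]. Then f₀ is continuous and differentiable on [0, m], with f₀'(0) = f₀'(m) = −1, f₀ is bounded below by −3m/32, and f₀' is locally Lipschitz continuous on [0, m]. -/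
/-!
Each of the five pieces of `f₀`, on `[0, m/16]`, `[m/16, 3m/16]`, `[3m/16, 13m/16]`,
`[13m/16, 15m/16]` and `[15m/16, m]`, is the restriction of a smooth function. Away from the
middle piece these are polynomials; on the middle one the two exponential branches and the value
`f₀(m/2) = m/4` combine into `m/4 + (5m/16) e ψ((x - m/2)/(5m/16))`, where `ψ` is the odd smooth
function equal to `exp (-1/t)` for `t > 0` (built from `expNegInvGlue`). The derivative of a `C²`
function is Lipschitz on a compact interval, and neighbouring pieces agree in value and in slope
(`-1`, `1`, `1`, `-1`) at the break points, so the one-sided derivatives glue to a derivative on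
`[0, m]` that is Lipschitz with the largest of the five constants.
-/

open Set Real

noncomputable def f0 (m : ℝ) (x : ℝ) : ℝ :=
  if x < m / 16 then -x
  else if x < 3 * m / 16 then (8 / m) * (x - m / 8) ^ 2 - 3 * m / 32
  else if x < m / 2 then -(5 * m / 16) * Real.exp ((5 * m / 16) / (x - m / 2) + 1) + m / 4
  else if x = m / 2 then m / 4
  else if x < 13 * m / 16 then (5 * m / 16) * Real.exp (-(5 * m / 16) / (x - m / 2) + 1) + m / 4
  else if x < 15 * m / 16 then (-8 / m) * (x - 7 * m / 8) ^ 2 + 19 * m / 32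
  else -x + 3 * m / 2

theorem LipschitzOnWith.Icc_union {α : Type*} [PseudoMetricSpace α] {g : ℝ → α} {K : NNReal}
    {a b c : ℝ} (h₁ : LipschitzOnWith K g (Icc a b)) (h₂ : LipschitzOnWith K g (Icc b c)) :
    LipschitzOnWith K g (Icc a c) := by
  have key : ∀ x ∈ Icc a c, ∀ y ∈ Icc a c, x ≤ y → dist (g x) (g y) ≤ K * dist x y := by
    rintro x ⟨hax, hxc⟩ y ⟨hay, hyc⟩ hxy
    rcases le_total y b with hyb | hby
    · exact h₁.dist_le_mul x ⟨hax, hxy.trans hyb⟩ y ⟨hay, hyb⟩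
    rcases le_total b x with hbx | hxb
    · exact h₂.dist_le_mul x ⟨hbx, hxc⟩ y ⟨hby, hyc⟩
    calc dist (g x) (g y) ≤ dist (g x) (g b) + dist (g b) (g y) := dist_triangle _ _ _
      _ ≤ K * dist x b + K * dist b y :=
        add_le_add (h₁.dist_le_mul x ⟨hax, hxb⟩ b ⟨hax.trans hxb, le_rfl⟩)
          (h₂.dist_le_mul b ⟨le_rfl, hby.trans hyc⟩ y ⟨hby, hyc⟩)
      _ = K * dist x y := by
        rw [Real.dist_eq, Real.dist_eq, Real.dist_eq, abs_of_nonpos (by linarith),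
          abs_of_nonpos (by linarith), abs_of_nonpos (by linarith)]
        ring
  refine LipschitzOnWith.of_dist_le_mul fun x hx y hy => ?_
  rcases le_total x y with hxy | hyx
  · exact key x hx y hy hxy
  · rw [dist_comm, dist_comm x]
    exact key y hy x hx hyx

theorem HasDerivWithinAt.of_notMem_Icc {f : ℝ → ℝ} {f' a b x : ℝ} (hx : x ∉ Icc a b) :
    HasDerivWithinAt f f' (Icc a b) x :=
  HasFDerivWithinAt.of_notMem_closure (by rwa [closure_Icc])

def HasLipschitzDerivOn (f f' : ℝ → ℝ) (s : Set ℝ) : Prop :=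
  (∀ x ∈ s, HasDerivWithinAt f (f' x) s x) ∧ ∃ K, LipschitzOnWith K f' s

namespace HasLipschitzDerivOn

variable {f f' g' : ℝ → ℝ} {s : Set ℝ} {a b c : ℝ}

theorem congr_deriv (h : HasLipschitzDerivOn f f' s) (hg : EqOn g' f' s) :
    HasLipschitzDerivOn f g' s := by
  obtain ⟨hd, K, hK⟩ := h
  exact ⟨fun x hx => hg hx ▸ hd x hx, K, fun x hx y hy => by rw [hg hx, hg hy]; exact hK hx hy⟩

theorem Icc_union (hab : a ≤ b) (hbc : b ≤ c) (h₁ : HasLipschitzDerivOn f f' (Icc a b))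
    (h₂ : HasLipschitzDerivOn f f' (Icc b c)) : HasLipschitzDerivOn f f' (Icc a c) := by
  obtain ⟨hd₁, K₁, hK₁⟩ := h₁
  obtain ⟨hd₂, K₂, hK₂⟩ := h₂
  refine ⟨fun x _ => ?_, max K₁ K₂,
    (hK₁.weaken (le_max_left _ _)).Icc_union (hK₂.weaken (le_max_right _ _))⟩
  rw [← Icc_union_Icc_eq_Icc hab hbc]
  exact .union (if hx : x ∈ Icc a b then hd₁ x hx else .of_notMem_Icc hx)
    (if hx : x ∈ Icc b c then hd₂ x hx else .of_notMem_Icc hx)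

theorem Icc_glue {f₁' f₂' : ℝ → ℝ} (hab : a ≤ b) (hbc : b ≤ c)
    (h₁ : HasLipschitzDerivOn f f₁' (Icc a b)) (h₂ : HasLipschitzDerivOn f f₂' (Icc b c))
    (hb : f₁' b = f₂' b) :
    HasLipschitzDerivOn f (fun x => if x ≤ b then f₁' x else f₂' x) (Icc a c) := by
  refine (h₁.congr_deriv fun x hx => if_pos hx.2).Icc_union hab hbc
    (h₂.congr_deriv fun x hx => ?_)
  rcases hx.1.eq_or_lt with rfl | hbx
  · exact (if_pos le_rfl).trans hb
  · exact if_neg hbx.not_ge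

end HasLipschitzDerivOn

theorem Set.EqOn.hasLipschitzDerivOn_Icc {f F : ℝ → ℝ} {a b : ℝ} (hfF : EqOn f F (Icc a b))
    (hF : ContDiff ℝ 2 F) : HasLipschitzDerivOn f (_root_.deriv F) (Icc a b) := by
  refine ⟨fun x hx => ?_, ?_⟩
  · exact ((hF.differentiable (by norm_num)).differentiableAt.hasDerivAt.hasDerivWithinAt).congr
      hfF (hfF hx)
  · exact (hF.deriv' (n := 1)).contDiffOn.exists_lipschitzOnWith one_ne_zero (convex_Icc a b)
      isCompact_Icc

theorem expNegInvGlue_one : expNegInvGlue 1 = exp (-1) := by simp [expNegInvGlue]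

theorem hasDerivAt_expNegInvGlue_one : HasDerivAt expNegInvGlue (exp (-1)) 1 := by
  have h : HasDerivAt (fun t => exp (-t⁻¹)) (exp (-1)) 1 := by
    simpa using ((hasDerivAt_inv one_ne_zero).neg).exp
  refine h.congr_of_eventuallyEq ?_
  filter_upwards [Ioi_mem_nhds one_pos] with t ht
  simp [expNegInvGlue, not_le.2 (mem_Ioi.1 ht)]

theorem hasDerivAt_expNegInvGlue_neg_one : HasDerivAt expNegInvGlue 0 (-1) := by
  refine (hasDerivAt_const (-1 : ℝ) (0 : ℝ)).congr_of_eventuallyEq ?_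
  filter_upwards [Iio_mem_nhds (neg_one_lt_zero (R := ℝ))] with t ht
  exact expNegInvGlue.zero_of_nonpos (le_of_lt ht)

noncomputable def oddExpNegInvGlue (t : ℝ) : ℝ := expNegInvGlue t - expNegInvGlue (-t)

namespace oddExpNegInvGlue

theorem contDiff {n : ℕ∞} : ContDiff ℝ n oddExpNegInvGlue :=
  expNegInvGlue.contDiff.sub (expNegInvGlue.contDiff.comp contDiff_neg)

theorem of_pos {t : ℝ} (ht : 0 < t) : oddExpNegInvGlue t = exp (-t⁻¹) := by
  simp [oddExpNegInvGlue, expNegInvGlue, not_le.2 ht, ht.le]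

theorem of_neg {t : ℝ} (ht : t < 0) : oddExpNegInvGlue t = -exp t⁻¹ := by
  simp [oddExpNegInvGlue, expNegInvGlue, not_le.2 ht, ht.le]

theorem neg_exp_neg_one_le {t : ℝ} (ht : -1 ≤ t) : -exp (-1) ≤ oddExpNegInvGlue t := by
  have h := expNegInvGlue.monotone (neg_le.1 ht)
  rw [expNegInvGlue_one] at h
  unfold oddExpNegInvGlue
  linarith [expNegInvGlue.nonneg t]

theorem hasDerivAt {a b t : ℝ} (ha : HasDerivAt expNegInvGlue a t)
    (hb : HasDerivAt expNegInvGlue b (-t)) : HasDerivAt oddExpNegInvGlue (a + b) t := by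
  have h := ha.sub (hb.comp t (hasDerivAt_neg t))
  rw [mul_neg_one, sub_neg_eq_add] at h
  exact h

theorem hasDerivAt_one : HasDerivAt oddExpNegInvGlue (exp (-1)) 1 := by
  simpa using hasDerivAt hasDerivAt_expNegInvGlue_one hasDerivAt_expNegInvGlue_neg_one

theorem hasDerivAt_neg_one : HasDerivAt oddExpNegInvGlue (exp (-1)) (-1) := by
  simpa using
    hasDerivAt hasDerivAt_expNegInvGlue_neg_one (by simpa using hasDerivAt_expNegInvGlue_one)

end oddExpNegInvGlue

noncomputable def f0Mid (m x : ℝ) : ℝ :=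
  m / 4 + 5 * m / 16 * exp 1 * oddExpNegInvGlue ((x - m / 2) / (5 * m / 16))

theorem exp_one_mul_exp_neg_one : exp 1 * exp (-1) = 1 := by
  rw [← exp_add, add_neg_cancel, exp_zero]

theorem deriv_mul_sub_sq_add (a b c x : ℝ) :
    deriv (fun x => a * (x - b) ^ 2 + c) x = 2 * a * (x - b) := by
  simp only [deriv_add_const', differentiableAt_const, deriv_const_mul_field',
    differentiableAt_fun_id, DifferentiableAt.fun_sub, deriv_fun_pow, Nat.cast_ofNat,
    Nat.add_one_sub_one, pow_one, deriv_fun_sub, deriv_id'', deriv_const', sub_zero, mul_one]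
  ring

section
variable {m : ℝ} (hm : 0 < m)
include hm

theorem f0_eqOn_left_linear : EqOn (f0 m) (fun x => -x) (Icc 0 (m / 16)) := by
  intro x hx
  rcases hx.2.lt_or_eq with hx | rfl
  · rw [f0, if_pos hx]
  · rw [f0, if_neg (lt_irrefl _), if_pos (by linarith)]
    field_simp
    ring

theorem f0_eqOn_left_quadratic :
    EqOn (f0 m) (fun x => 8 / m * (x - m / 8) ^ 2 + -(3 * m / 32)) (Icc (m / 16) (3 * m / 16)) := by
  intro x hx
  rcases hx.2.lt_or_eq with hx' | rfl
  · rw [f0, if_neg hx.1.not_gt, if_pos hx', sub_eq_add_neg]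
  · rw [f0, if_neg (by linarith), if_neg (lt_irrefl _), if_pos (by linarith),
      show 5 * m / 16 / (3 * m / 16 - m / 2) = -1 by field_simp; ring]
    simp only [neg_add_cancel, exp_zero]
    field_simp
    ring

theorem f0_eqOn_mid : EqOn (f0 m) (f0Mid m) (Icc (3 * m / 16) (13 * m / 16)) := by
  rintro x ⟨hx₁, hx₂⟩
  rcases lt_trichotomy x (m / 2) with hlt | rfl | hgt
  · have ht : (x - m / 2) / (5 * m / 16) < 0 := div_neg_of_neg_of_pos (by linarith) (by positivity)
    rw [f0, if_neg (by linarith), if_neg (by linarith), if_pos hlt, f0Mid,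
      oddExpNegInvGlue.of_neg ht, inv_div, exp_add]
    ring
  · rw [f0, if_neg (by linarith), if_neg (by linarith), if_neg (lt_irrefl _), if_pos rfl, f0Mid]
    simp [oddExpNegInvGlue]
  rcases hx₂.lt_or_eq with hlt | rfl
  · have ht : 0 < (x - m / 2) / (5 * m / 16) := div_pos (by linarith) (by positivity)
    rw [f0, if_neg (by linarith), if_neg (by linarith), if_neg (by linarith), if_neg hgt.ne',
      if_pos hlt, f0Mid, oddExpNegInvGlue.of_pos ht, inv_div, exp_add, neg_div]
    ring
  · have ht : (13 * m / 16 - m / 2) / (5 * m / 16) = 1 := by field_simp; ring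
    rw [f0, if_neg (by linarith), if_neg (by linarith), if_neg (by linarith), if_neg hgt.ne',
      if_neg (lt_irrefl _), if_pos (by linarith), f0Mid, ht, oddExpNegInvGlue.of_pos one_pos,
      inv_one, mul_assoc, exp_one_mul_exp_neg_one]
    field_simp
    ring

theorem f0_eqOn_right_quadratic : EqOn (f0 m) (fun x => -8 / m * (x - 7 * m / 8) ^ 2 + 19 * m / 32)
    (Icc (13 * m / 16) (15 * m / 16)) := by
  rintro x ⟨hx₁, hx₂⟩
  rcases hx₂.lt_or_eq with hx₂ | rfl
  · rw [f0, if_neg (by linarith), if_neg (by linarith), if_neg (by linarith),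
      if_neg (by linarith), if_neg hx₁.not_gt, if_pos hx₂]
  · rw [f0, if_neg (by linarith), if_neg (by linarith), if_neg (by linarith),
      if_neg (by linarith), if_neg (by linarith), if_neg (lt_irrefl _)]
    field_simp
    ring

theorem f0_eqOn_right_linear : EqOn (f0 m) (fun x => -x + 3 * m / 2) (Icc (15 * m / 16) m) := by
  rintro x ⟨hx, -⟩
  rw [f0, if_neg (by linarith), if_neg (by linarith), if_neg (by linarith), if_neg (by linarith),
    if_neg (by linarith), if_neg hx.not_gt]

end

theorem contDiff_f0Mid (m : ℝ) {n : ℕ∞} : ContDiff ℝ n (f0Mid m) :=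
  contDiff_const.add (contDiff_const.mul (oddExpNegInvGlue.contDiff.comp (by fun_prop)))

theorem hasDerivAt_f0Mid {m x : ℝ} (hm : 0 < m)
    (h : HasDerivAt oddExpNegInvGlue (exp (-1)) ((x - m / 2) / (5 * m / 16))) :
    HasDerivAt (f0Mid m) 1 x := by
  have h' : HasDerivAt (f0Mid m) (5 * m / 16 * exp 1 * (exp (-1) * (1 / (5 * m / 16)))) x :=
    ((h.comp x (((hasDerivAt_id x).sub_const (m / 2)).div_const (5 * m / 16))).const_mul
      (5 * m / 16 * exp 1)).const_add (m / 4)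
  refine h'.congr_deriv ?_
  rw [← mul_assoc, mul_assoc _ (exp 1), exp_one_mul_exp_neg_one]
  field_simp

theorem neg_div_sixteen_le_f0Mid {m x : ℝ} (hm : 0 < m) (hx : 3 * m / 16 ≤ x) :
    -m / 16 ≤ f0Mid m x := by
  have ht : -1 ≤ (x - m / 2) / (5 * m / 16) := by
    rw [le_div_iff₀ (by positivity)]; linarith
  have h := mul_le_mul_of_nonneg_left (oddExpNegInvGlue.neg_exp_neg_one_le ht)
    (by positivity : 0 ≤ 5 * m / 16 * exp 1)
  rw [mul_neg, mul_assoc, exp_one_mul_exp_neg_one] at h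
  rw [f0Mid]
  linarith

theorem f0_hasLipschitzDerivOn {m : ℝ} (hm : 0 < m) :
    ∃ f' : ℝ → ℝ, HasLipschitzDerivOn (f0 m) f' (Icc 0 m) ∧ f' 0 = -1 ∧ f' m = -1 := by
  have h₁ := (f0_eqOn_left_linear hm).hasLipschitzDerivOn_Icc (by fun_prop)
  have h₂ := (f0_eqOn_left_quadratic hm).hasLipschitzDerivOn_Icc (by fun_prop)
  have h₃ := (f0_eqOn_mid hm).hasLipschitzDerivOn_Icc (contDiff_f0Mid m)
  have h₄ := (f0_eqOn_right_quadratic hm).hasLipschitzDerivOn_Icc (by fun_prop)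
  have h₅ := (f0_eqOn_right_linear hm).hasLipschitzDerivOn_Icc (by fun_prop)
  have d₃ : deriv (f0Mid m) (3 * m / 16) = 1 := (hasDerivAt_f0Mid hm (by
    convert oddExpNegInvGlue.hasDerivAt_neg_one using 2; field_simp; ring)).deriv
  have d₃' : deriv (f0Mid m) (13 * m / 16) = 1 := (hasDerivAt_f0Mid hm (by
    convert oddExpNegInvGlue.hasDerivAt_one using 2; field_simp; ring)).deriv
  have h₄₅ := h₄.Icc_glue (by linarith) (by linarith) h₅ (by
    rw [deriv_mul_sub_sq_add, deriv_add_const, deriv_neg'']; field_simp; ring)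
  have h₃₅ := h₃.Icc_glue (by linarith) (by linarith) h₄₅ (by
    rw [if_pos (by linarith), d₃', deriv_mul_sub_sq_add]; field_simp; ring)
  have h₂₅ := h₂.Icc_glue (by linarith) (by linarith) h₃₅ (by
    rw [if_pos (by linarith), d₃, deriv_mul_sub_sq_add]; field_simp; ring)
  have h₁₅ := h₁.Icc_glue (by linarith) (by linarith) h₂₅ (by
    rw [if_pos (by linarith), deriv_mul_sub_sq_add, deriv_neg'']; field_simp; ring)
  refine ⟨_, h₁₅, by rw [if_pos (by linarith), deriv_neg''], ?_⟩
  rw [if_neg (by linarith), if_neg (by linarith), if_neg (by linarith), if_neg (by linarith),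
    deriv_add_const, deriv_neg'']

theorem le_f0_of_mem_Icc {m : ℝ} (hm : 0 < m) : ∀ x ∈ Icc 0 m, -(3 * m) / 32 ≤ f0 m x := by
  rintro x ⟨hx₀, hxm⟩
  rcases le_total x (m / 16) with h₁ | h₁
  · rw [f0_eqOn_left_linear hm ⟨hx₀, h₁⟩]
    linarith
  rcases le_total x (3 * m / 16) with h₂ | h₂
  · rw [f0_eqOn_left_quadratic hm ⟨h₁, h₂⟩]
    have : 0 ≤ 8 / m * (x - m / 8) ^ 2 := by positivity
    linarith
  rcases le_total x (13 * m / 16) with h₃ | h₃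
  · rw [f0_eqOn_mid hm ⟨h₂, h₃⟩]
    linarith [neg_div_sixteen_le_f0Mid hm h₂]
  rcases le_total x (15 * m / 16) with h₄ | h₄
  · rw [f0_eqOn_right_quadratic hm ⟨h₃, h₄⟩]
    have hsq : 8 / m * (x - 7 * m / 8) ^ 2 ≤ 8 / m * (m / 16) ^ 2 :=
      mul_le_mul_of_nonneg_left (sq_le_sq' (by linarith) (by linarith)) (by positivity)
    have : 8 / m * (m / 16) ^ 2 = m / 32 := by field_simp; ring
    linarith [show -8 / m * (x - 7 * m / 8) ^ 2 = -(8 / m * (x - 7 * m / 8) ^ 2) by ring]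
  · rw [f0_eqOn_right_linear hm ⟨h₄, hxm⟩]
    linarith

/-- `f₀` is continuous and differentiable on `[0, m]` (one-sided derivatives at the
endpoints), with derivative `−1` at `0` and at `m`, is bounded below by `−3m/32`, and
its derivative is Lipschitz continuous on `[0, m]`. -/
theorem f0_properties (m : ℝ) (hm : 0 < m) :
    ContinuousOn (f0 m) (Icc 0 m) ∧
    (∃ f0' : ℝ → ℝ,
      (∀ x ∈ Icc 0 m, HasDerivWithinAt (f0 m) (f0' x) (Icc 0 m) x) ∧
      f0' 0 = -1 ∧ f0' m = -1 ∧
      (∃ L : ℝ, 0 ≤ L ∧ ∀ x ∈ Icc 0 m, ∀ y ∈ Icc 0 m,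
        |f0' x - f0' y| ≤ L * |x - y|)) ∧
    (∀ x ∈ Icc 0 m, -(3 * m) / 32 ≤ f0 m x) := by
  obtain ⟨f', ⟨hderiv, K, hK⟩, hf'0, hf'm⟩ := f0_hasLipschitzDerivOn hm
  refine ⟨fun x hx => (hderiv x hx).continuousWithinAt,
    ⟨f', hderiv, hf'0, hf'm, K, K.2, fun x hx y hy => ?_⟩, le_f0_of_mem_Icc hm⟩
  simpa only [Real.dist_eq] using hK.dist_le_mul x hx y hy
end

section
/- Let (m_k) be positive reals with ∑ m_k = ∞ and m_k → 0, and let S_0 = 0, S_{k+1} = S_k + m_k. There exists a function F : ℝ → ℝ that is differentiable with locally Lipschitz derivative, bounded below, and satisfies F(S_k) = S_k/2 and F'(S_k) = −1 for all k. Consequently, the gradient descent iterates x_0 = 0, x_{k+1} = x_k − m_k F'(x_k) satisfy x_k = S_k for all k; hence x_k → ∞, F(x_k) → ∞, and |F'(x_k)| = 1 for all k. -/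
/-!
On `[s k, s (k + 1)]` let `F'` be the quadratic bump
`-1 + 9 (x - s k) (s (k + 1) - x) / (s (k + 1) - s k) ^ 2`, which is `-1` at both ends and has
integral `(s (k + 1) - s k) / 2`, and left of `s 0` let `F' = -1`. These pieces glue to a locally
Lipschitz function whose primitive `F` from `s 0` satisfies `F (s k) = (s k - s 0) / 2`. As
`F' (s k) = -1`, the gradient step of length `s (k + 1) - s k` from `s k` lands exactly on
`s (k + 1)`, so gradient descent runs off to infinity while `F` grows. Since `F' ≥ -1`, on each
interval `F` dips at most `s (k + 1) - s k` below `F (s k) ≥ 0`, so bounded steps keep `F`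
bounded below.
-/

open Filter Set NNReal

noncomputable def bump (a b x : ℝ) : ℝ := -1 + 9 * ((x - a) * (b - x)) / (b - a) ^ 2

section Bump

variable {a b x : ℝ}

@[simp] lemma bump_left : bump a b a = -1 := by simp [bump]

@[simp] lemma bump_right : bump a b b = -1 := by simp [bump]

lemma neg_one_le_bump (hx : x ∈ Icc a b) : -1 ≤ bump a b x := by
  have : 0 ≤ (x - a) * (b - x) := mul_nonneg (sub_nonneg.2 hx.1) (sub_nonneg.2 hx.2)
  exact le_add_of_nonneg_right (by positivity)

lemma contDiff_bump (n : ℕ∞) : ContDiff ℝ n (bump a b) := by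
  unfold bump; fun_prop

lemma hasDerivAt_bump_primitive (hab : a ≠ b) (x : ℝ) :
    HasDerivAt
      (fun x => -(x - a) + 9 * (x - a) ^ 2 / (2 * (b - a)) - 3 * (x - a) ^ 3 / (b - a) ^ 2)
      (bump a b x) x := by
  have hu : HasDerivAt (fun x => x - a) 1 x := (hasDerivAt_id' x).sub_const a
  have hba : b - a ≠ 0 := sub_ne_zero.2 hab.symm
  refine ((hu.neg.add ((hu.pow 2).const_mul 9 |>.div_const (2 * (b - a)))).sub
    ((hu.pow 3).const_mul 3 |>.div_const ((b - a) ^ 2))).congr_deriv ?_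
  simp only [bump]
  field_simp
  ring

lemma integral_bump (hab : a ≠ b) : ∫ x in a..b, bump a b x = (b - a) / 2 := by
  rw [intervalIntegral.integral_eq_sub_of_hasDerivAt (fun x _ => hasDerivAt_bump_primitive hab x)
    ((contDiff_bump 0).continuous.intervalIntegrable _ _)]
  have hba : b - a ≠ 0 := sub_ne_zero.2 hab.symm
  field_simp
  ring

end Bump

theorem LipschitzOnWith.union_of_subset_Iic_of_subset_Ici {E : Type*} [PseudoMetricSpace E]
    {f : ℝ → E} {K : ℝ≥0} {s t : Set ℝ} {b : ℝ} (hs : LipschitzOnWith K f s)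
    (ht : LipschitzOnWith K f t) (hbs : b ∈ s) (hbt : b ∈ t) (hsb : s ⊆ Iic b)
    (htb : t ⊆ Ici b) :
    LipschitzOnWith K f (s ∪ t) := by
  have cross : ∀ x ∈ s, ∀ y ∈ t, dist (f x) (f y) ≤ K * dist x y := fun x hx y hy =>
    calc dist (f x) (f y) ≤ dist (f x) (f b) + dist (f b) (f y) := dist_triangle _ _ _
      _ ≤ K * dist x b + K * dist b y :=
        add_le_add (hs.dist_le_mul x hx b hbs) (ht.dist_le_mul b hbt y hy)
      _ = K * dist x y := by
        have hxb : x ≤ b := hsb hx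
        have hby : b ≤ y := htb hy
        rw [← mul_add, Real.dist_eq, Real.dist_eq, Real.dist_eq, abs_of_nonpos (sub_nonpos.2 hxb),
          abs_of_nonpos (sub_nonpos.2 hby), abs_of_nonpos (sub_nonpos.2 (hxb.trans hby))]
        ring
  refine LipschitzOnWith.of_dist_le_mul fun x hx y hy => ?_
  rcases hx with hx | hx <;> rcases hy with hy | hy
  · exact hs.dist_le_mul x hx y hy
  · exact cross x hx y hy
  · rw [dist_comm, dist_comm x]; exact cross y hy x hx
  · exact ht.dist_le_mul x hx y hy

open Classical in
/-- For strictly increasing `s`, `Nat.find` picks the `k` with `x ∈ [s k, s (k + 1))`. -/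
noncomputable def gluedBump (s : ℕ → ℝ) (x : ℝ) : ℝ :=
  if h : s 0 ≤ x ∧ ∃ n, x < s (n + 1) then bump (s (Nat.find h.2)) (s (Nat.find h.2 + 1)) x
  else -1

section GluedBump

variable {s : ℕ → ℝ}

lemma neg_one_le_gluedBump (x : ℝ) : -1 ≤ gluedBump s x := by
  unfold gluedBump
  split_ifs with h
  · refine neg_one_le_bump ⟨?_, (Nat.find_spec h.2).le⟩
    rcases Nat.eq_zero_or_eq_succ_pred (Nat.find h.2) with h0 | h0
    · rw [h0]; exact h.1
    · rw [h0]; exact not_lt.1 (Nat.find_min h.2 (h0 ▸ Nat.pred_lt_self (by omega)))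
  · exact le_rfl

lemma gluedBump_of_mem_Ico (hs : StrictMono s) {k : ℕ} {x : ℝ}
    (hx : x ∈ Ico (s k) (s (k + 1))) :
    gluedBump s x = bump (s k) (s (k + 1)) x := by
  have h : s 0 ≤ x ∧ ∃ n, x < s (n + 1) := ⟨(hs.monotone k.zero_le).trans hx.1, k, hx.2⟩
  have hk : Nat.find h.2 = k := (Nat.find_eq_iff h.2).2
    ⟨hx.2, fun j hj => not_lt.2 ((hs.monotone hj).trans hx.1)⟩
  rw [gluedBump, dif_pos h, hk]

lemma gluedBump_apply_nat (hs : StrictMono s) (k : ℕ) : gluedBump s (s k) = -1 := by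
  rw [gluedBump_of_mem_Ico hs ⟨le_rfl, hs k.lt_succ_self⟩, bump_left]

lemma gluedBump_of_le (hs : StrictMono s) {x : ℝ} (hx : x ≤ s 0) : gluedBump s x = -1 := by
  rcases hx.lt_or_eq with hx | rfl
  · exact dif_neg fun h => hx.not_ge h.1
  · exact gluedBump_apply_nat hs 0

lemma eqOn_gluedBump_bump (hs : StrictMono s) (k : ℕ) :
    EqOn (gluedBump s) (bump (s k) (s (k + 1))) (Icc (s k) (s (k + 1))) := by
  intro x hx
  rcases hx.2.lt_or_eq with hlt | rfl
  · exact gluedBump_of_mem_Ico hs ⟨hx.1, hlt⟩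
  · rw [gluedBump_apply_nat hs, bump_right]

lemma exists_lipschitzOnWith_gluedBump_Iic (hs : StrictMono s) (n : ℕ) :
    ∃ K, LipschitzOnWith K (gluedBump s) (Iic (s n)) := by
  induction n with
  | zero =>
    refine ⟨0, LipschitzOnWith.of_dist_le_mul fun x hx y hy => ?_⟩
    rw [gluedBump_of_le hs hx, gluedBump_of_le hs hy]
    simp
  | succ n ih =>
    obtain ⟨K₁, hK₁⟩ := ih
    obtain ⟨K₂, hK₂⟩ := ((contDiff_bump 1).contDiffOn.congr
      (eqOn_gluedBump_bump hs n)).exists_lipschitzOnWith one_ne_zero (convex_Icc _ _) isCompact_Icc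
    have hle : s n ≤ s (n + 1) := (hs n.lt_succ_self).le
    refine ⟨max K₁ K₂, ?_⟩
    rw [← Iic_union_Icc_eq_Iic hle]
    exact (hK₁.weaken (le_max_left _ _)).union_of_subset_Iic_of_subset_Ici
      (hK₂.weaken (le_max_right _ _)) (mem_Iic.2 le_rfl) (left_mem_Icc.2 hle) subset_rfl
      Icc_subset_Ici_self

lemma locallyLipschitz_gluedBump (hs : StrictMono s) (htop : Tendsto s atTop atTop) :
    LocallyLipschitz (gluedBump s) := by
  intro x
  obtain ⟨n, hn⟩ := (htop.eventually_gt_atTop x).exists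
  obtain ⟨K, hK⟩ := exists_lipschitzOnWith_gluedBump_Iic hs n
  exact ⟨K, Iic (s n), Iic_mem_nhds hn, hK⟩

lemma intervalIntegrable_gluedBump (hs : StrictMono s) {a b : ℝ} {n : ℕ} (ha : a ≤ s n)
    (hb : b ≤ s n) : IntervalIntegrable (gluedBump s) MeasureTheory.volume a b :=
  have ⟨_, hK⟩ := exists_lipschitzOnWith_gluedBump_Iic hs n
  (hK.continuousOn.mono fun _ ht => ht.2.trans (max_le ha hb)).intervalIntegrable

lemma integral_gluedBump_nat (hs : StrictMono s) (k : ℕ) :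
    ∫ t in s 0..s k, gluedBump s t = (s k - s 0) / 2 := by
  induction k with
  | zero => simp
  | succ k ih =>
    have hle : s k ≤ s (k + 1) := (hs k.lt_succ_self).le
    have h0 : s 0 ≤ s (k + 1) := hs.monotone (k + 1).zero_le
    rw [← intervalIntegral.integral_add_adjacent_intervals
      (intervalIntegrable_gluedBump hs h0 hle) (intervalIntegrable_gluedBump hs hle le_rfl), ih,
      intervalIntegral.integral_congr ((eqOn_gluedBump_bump hs k).mono (uIcc_of_le hle).subset),
      integral_bump (hs k.lt_succ_self).ne]
    ring

lemma neg_le_integral_gluedBump (hs : StrictMono s) (htop : Tendsto s atTop atTop) {M : ℝ}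
    (hM : ∀ k, s (k + 1) - s k ≤ M) (x : ℝ) : -M ≤ ∫ t in s 0..x, gluedBump s t := by
  rcases le_total x (s 0) with hx | hx
  · have hM0 : 0 ≤ M := (sub_pos.2 (hs zero_lt_one)).le.trans (hM 0)
    have : ∫ t in s 0..x, gluedBump s t = ∫ _ in s 0..x, (-1 : ℝ) :=
      intervalIntegral.integral_congr fun t ht => gluedBump_of_le hs
        (by rw [uIcc_of_ge hx] at ht; exact ht.2)
    rw [this, intervalIntegral.integral_const, smul_eq_mul]
    linarith
  · obtain ⟨k, hk⟩ : ∃ k, x ∈ Ico (s k) (s (k + 1)) := by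
      have hcover := iUnion_Ico_map_succ_eq_Ici (fun k => hs.monotone k.zero_le)
        (not_bddAbove_of_tendsto_atTop htop)
      simpa using hcover.ge (show x ∈ Ici (s ⊥) from hx)
    have hint (a b : ℝ) : IntervalIntegrable (gluedBump s) MeasureTheory.volume a b :=
      (locallyLipschitz_gluedBump hs htop).continuous.intervalIntegrable a b
    have hlow : -(x - s k) ≤ ∫ t in s k..x, gluedBump s t := by
      simpa using intervalIntegral.integral_mono_on hk.1 intervalIntegrable_const (hint _ _)
        fun t _ => neg_one_le_gluedBump t
    rw [← intervalIntegral.integral_add_adjacent_intervals (hint (s 0) (s k)) (hint (s k) x),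
      integral_gluedBump_nat hs k]
    linarith [hM k, hk.2, hs.monotone k.zero_le]

end GluedBump

/-- Divergence example: given positive step sizes `m_k` with `∑ m_k = ∞` and `m_k → 0`,
and partial sums `S_0 = 0`, `S_{k+1} = S_k + m_k`, there is a function `F : ℝ → ℝ`,
differentiable with locally Lipschitz derivative and bounded below, with
`F(S_k) = S_k/2` and `F'(S_k) = −1` for all `k`; consequently the gradient descent
iterates `x_0 = 0`, `x_{k+1} = x_k − m_k F'(x_k)` satisfy `x_k = S_k`, hence
`x_k → ∞`, `F(x_k) → ∞`, and `|F'(x_k)| = 1` for all `k`. -/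
theorem divergence_example (m : ℕ → ℝ) (hpos : ∀ k, 0 < m k)
    (hdiv : Tendsto (fun n => ∑ j ∈ Finset.range n, m j) atTop atTop)
    (hto0 : Tendsto m atTop (nhds 0))
    (S : ℕ → ℝ) (hS : ∀ k, S k = ∑ j ∈ Finset.range k, m j) :
    ∃ F F' : ℝ → ℝ,
      (∀ x : ℝ, HasDerivAt F (F' x) x) ∧
      (∀ K : Set ℝ, IsCompact K →
        ∃ L : ℝ, 0 ≤ L ∧ ∀ x ∈ K, ∀ y ∈ K, |F' x - F' y| ≤ L * |x - y|) ∧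
      (∃ B : ℝ, ∀ x, B ≤ F x) ∧
      (∀ k, F (S k) = S k / 2) ∧
      (∀ k, F' (S k) = -1) ∧
      (∀ x : ℕ → ℝ, x 0 = 0 → (∀ k, x (k + 1) = x k - m k * F' (x k)) →
        (∀ k, x k = S k) ∧
        Tendsto x atTop atTop ∧
        Tendsto (fun k => F (x k)) atTop atTop ∧
        (∀ k, |F' (x k)| = 1)) := by
  have hS0 : S 0 = 0 := by simp [hS]
  have hstep (k : ℕ) : S (k + 1) - S k = m k := by simp [hS, Finset.sum_range_succ]
  have hmono : StrictMono S := strictMono_nat_of_lt_succ fun k => by linarith [hstep k, hpos k]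
  have htop : Tendsto S atTop atTop := by simpa only [← hS] using hdiv
  obtain ⟨M, hM⟩ := hto0.bddAbove_range
  have hF (k : ℕ) : ∫ t in S 0..S k, gluedBump S t = S k / 2 := by
    rw [integral_gluedBump_nat hmono, hS0, sub_zero]
  have hG := locallyLipschitz_gluedBump hmono htop
  refine ⟨fun x => ∫ t in S 0..x, gluedBump S t, gluedBump S,
    fun x => (hG.continuous.integral_hasStrictDerivAt _ x).hasDerivAt, fun K hK => ?_,
    ⟨-M, neg_le_integral_gluedBump hmono htop fun k => hstep k ▸ hM ⟨k, rfl⟩⟩, hF,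
    gluedBump_apply_nat hmono, fun x hx0 hx_step => ?_⟩
  · obtain ⟨L, hL⟩ := hG.locallyLipschitzOn.exists_lipschitzOnWith_of_compact hK
    exact ⟨L, L.2, fun x hx y hy => by simpa only [Real.dist_eq] using hL.dist_le_mul x hx y hy⟩
  · have hxS : x = S := by
      funext k
      induction k with
      | zero => rw [hx0, hS0]
      | succ k ih => rw [hx_step, ih, gluedBump_apply_nat hmono, ← hstep]; ring
    subst hxS
    exact ⟨fun _ => rfl, htop, by simpa only [hF] using htop.atTop_div_const two_pos,
      fun k => by rw [gluedBump_apply_nat hmono, abs_neg, abs_one]⟩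
end

section
/- The Palis-de Melo function F : ℝ² → ℝ is differentiable at every point of the unit circle {x : ‖x‖ = 1}, with gradient equal to 0 there. -/
open Topology


/-- The Palis-de Melo function on `ℝ²`. -/
noncomputable def pdm (x : EuclideanSpace ℝ (Fin 2)) : ℝ :=
  if ‖x‖ < 1 then Real.exp (1 / (‖x‖ ^ 2 - 1))
  else if ‖x‖ = 1 then 0
  else -Real.exp (-1 / (‖x‖ ^ 2 - 1)) *
    (Real.sin (1 / (‖x‖ - 1)) * x 0 / ‖x‖ - Real.cos (1 / (‖x‖ - 1)) * x 1 / ‖x‖)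

lemma pdm_exp_aux {t : ℝ} (ht : 0 < t) : Real.exp (-(1 / t)) ≤ 4 * t ^ 2 := by
  have h1 : Real.exp (1 / (2 * t)) ≥ 1 / (2 * t) + 1 := by
    have := Real.add_one_le_exp (1 / (2 * t)); linarith
  have h2 : Real.exp (1 / t) = Real.exp (1 / (2 * t)) ^ 2 := by
    rw [sq, ← Real.exp_add]; ring_nf
  have h3 : (1 / (2 * t)) ^ 2 ≤ Real.exp (1 / t) := by
    rw [h2]
    have h0 : 0 ≤ 1 / (2 * t) := by positivity
    nlinarith
  have h4 : Real.exp (-(1 / t)) = (Real.exp (1 / t))⁻¹ := by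
    rw [← Real.exp_neg]
  rw [h4]
  have h5 : (0:ℝ) < (1 / (2 * t)) ^ 2 := by positivity
  have h6 : (Real.exp (1 / t))⁻¹ ≤ ((1 / (2 * t)) ^ 2)⁻¹ := by
    apply inv_anti₀ h5 h3
  calc (Real.exp (1 / t))⁻¹ ≤ ((1 / (2 * t)) ^ 2)⁻¹ := h6
    _ = 4 * t ^ 2 := by field_simp; ring

lemma pdm_coord_le (y : EuclideanSpace ℝ (Fin 2)) (i : Fin 2) : |y i| ≤ ‖y‖ := by
  have h : ‖y‖ ^ 2 = (y 0) ^ 2 + (y 1) ^ 2 := by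
    rw [EuclideanSpace.norm_eq]
    rw [Real.sq_sqrt (by positivity)]
    simp [Fin.sum_univ_two, sq_abs]
  have hn : (0:ℝ) ≤ ‖y‖ := norm_nonneg y
  fin_cases i
  · show |y 0| ≤ ‖y‖
    nlinarith [abs_nonneg (y 0), sq_abs (y 0), sq_nonneg (y 1)]
  · show |y 1| ≤ ‖y‖
    nlinarith [abs_nonneg (y 1), sq_abs (y 1), sq_nonneg (y 0)]

lemma pdm_bound {x y : EuclideanSpace ℝ (Fin 2)} (hx : ‖x‖ = 1) (hy : ‖y - x‖ ≤ 1) :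
    |pdm y| ≤ 72 * ‖y - x‖ ^ 2 := by
  have hd : |‖y‖ - 1| ≤ ‖y - x‖ := by
    have := abs_norm_sub_norm_le y x
    rw [hx] at this; exact this
  unfold pdm
  split_ifs with h1 h2
  · -- ‖y‖ < 1
    have ht : 0 < 1 - ‖y‖ ^ 2 := by nlinarith [norm_nonneg y]
    have heq : (1 : ℝ) / (‖y‖ ^ 2 - 1) = -(1 / (1 - ‖y‖ ^ 2)) := by
      rw [one_div, one_div, ← inv_neg, neg_sub]
    rw [heq]
    have hb := pdm_exp_aux ht
    have h2 : 1 - ‖y‖ ^ 2 ≤ 2 * ‖y - x‖ := by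
      have : 1 - ‖y‖ ≤ ‖y - x‖ := by
        have := abs_le.mp hd; linarith [this.1]
      nlinarith [norm_nonneg y]
    rw [abs_of_pos (Real.exp_pos _)]
    calc Real.exp (-(1 / (1 - ‖y‖ ^ 2))) ≤ 4 * (1 - ‖y‖ ^ 2) ^ 2 := hb
      _ ≤ 72 * ‖y - x‖ ^ 2 := by nlinarith [norm_nonneg (y - x)]
  · simpa using by positivity
  · -- ‖y‖ > 1
    have hg : 1 < ‖y‖ := lt_of_le_of_ne (not_lt.mp h1) (Ne.symm h2)
    have ht : 0 < ‖y‖ ^ 2 - 1 := by nlinarith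
    have heq : (-1 : ℝ) / (‖y‖ ^ 2 - 1) = -(1 / (‖y‖ ^ 2 - 1)) := by ring
    have hb := pdm_exp_aux ht
    have hS : |Real.sin (1 / (‖y‖ - 1)) * y 0 / ‖y‖ - Real.cos (1 / (‖y‖ - 1)) * y 1 / ‖y‖| ≤ 2 := by
      have h0 : |y 0| ≤ ‖y‖ := pdm_coord_le y 0
      have h1' : |y 1| ≤ ‖y‖ := pdm_coord_le y 1
      have hs := Real.abs_sin_le_one (1 / (‖y‖ - 1))
      have hc := Real.abs_cos_le_one (1 / (‖y‖ - 1))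
      have hny : (0:ℝ) < ‖y‖ := by linarith
      have e1 : |Real.sin (1 / (‖y‖ - 1)) * y 0 / ‖y‖| ≤ 1 := by
        rw [abs_div, abs_mul, abs_of_pos hny]
        rw [div_le_one hny]
        nlinarith [abs_nonneg (y 0), abs_nonneg (Real.sin (1 / (‖y‖ - 1)))]
      have e2 : |Real.cos (1 / (‖y‖ - 1)) * y 1 / ‖y‖| ≤ 1 := by
        rw [abs_div, abs_mul, abs_of_pos hny]
        rw [div_le_one hny]
        nlinarith [abs_nonneg (y 1), abs_nonneg (Real.cos (1 / (‖y‖ - 1)))]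
      calc _ ≤ |Real.sin (1 / (‖y‖ - 1)) * y 0 / ‖y‖| + |Real.cos (1 / (‖y‖ - 1)) * y 1 / ‖y‖| :=
          abs_sub _ _
        _ ≤ 2 := by linarith
    have hny2 : ‖y‖ ≤ 2 := by
      have := abs_le.mp hd; linarith [this.2]
    have h3 : ‖y‖ ^ 2 - 1 ≤ 3 * ‖y - x‖ := by
      have : ‖y‖ - 1 ≤ ‖y - x‖ := by have := abs_le.mp hd; linarith [this.2]
      nlinarith
    rw [abs_mul, abs_neg, abs_of_pos (Real.exp_pos _), heq]
    set S : ℝ := |Real.sin (1 / (‖y‖ - 1)) * y 0 / ‖y‖ - Real.cos (1 / (‖y‖ - 1)) * y 1 / ‖y‖| with hSdef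
    have hS0 : 0 ≤ S := abs_nonneg _
    have hE0 : 0 ≤ Real.exp (-(1 / (‖y‖ ^ 2 - 1))) := (Real.exp_pos _).le
    have step1 : Real.exp (-(1 / (‖y‖ ^ 2 - 1))) * S ≤ (4 * (‖y‖ ^ 2 - 1) ^ 2) * 2 := by
      nlinarith [sq_nonneg (‖y‖ ^ 2 - 1)]
    have step2 : (4 * (‖y‖ ^ 2 - 1) ^ 2) * 2 ≤ 72 * ‖y - x‖ ^ 2 := by
      nlinarith [norm_nonneg (y - x), sq_nonneg (3 * ‖y - x‖ - (‖y‖ ^ 2 - 1))]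
    linarith

/-- The Palis-de Melo function is differentiable at every point of the unit circle,
with gradient `0` there. -/
theorem pdm_gradient_zero_on_unit_circle :
    ∀ x : EuclideanSpace ℝ (Fin 2), ‖x‖ = 1 → HasGradientAt pdm 0 x := by
  intro x hx
  rw [hasGradientAt_iff_isLittleO]
  have hpx : pdm x = 0 := by
    unfold pdm; rw [if_neg (by simp [hx]), if_pos hx]
  simp only [hpx, inner_zero_left, sub_zero]
  rw [Asymptotics.isLittleO_iff]
  intro c hc
  have hmem : Metric.ball x (min 1 (c / 72)) ∈ 𝓝 x :=
    Metric.ball_mem_nhds x (lt_min one_pos (by positivity))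
  filter_upwards [hmem] with y hy
  rw [Metric.mem_ball, dist_eq_norm] at hy
  have h1 : ‖y - x‖ ≤ 1 := le_trans hy.le (min_le_left _ _)
  have h2 : ‖y - x‖ ≤ c / 72 := le_trans hy.le (min_le_right _ _)
  have hb := pdm_bound hx h1
  rw [Real.norm_eq_abs]
  calc |pdm y| ≤ 72 * ‖y - x‖ ^ 2 := hb
    _ ≤ c * ‖y - x‖ := by nlinarith [norm_nonneg (y - x)]
end
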